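/- arXiv:1605.01438 — 6 statements merged into one kernel-verified Lean document; each statement's English description precedes it below -/
import Mathlib

section
/- Let y ∈ ℝ^M, let B be a real P×M matrix, and let λ ≥ 0. Let ŵ be any minimizer of the dual objective (1/2)‖y − Bᵀw‖₂² over the box {w ∈ ℝ^P : ‖w‖_∞ ≤ λ} (such a minimizer exists by compactness). Then the TV estimate satisfies f̂_λ(y) = y − Bᵀŵ; in particular Bᵀŵ is the same vector for every minimizer ŵ of the dual problem. -/
open Matrix

/-- The total variation objective `F(f) = (1/2)‖y − f‖₂² + λ‖Bf‖₁`. -/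
noncomputable def tvF {P M : ℕ} (B : Matrix (Fin P) (Fin M) ℝ) (lam : ℝ)
    (y f : Fin M → ℝ) : ℝ :=
  (1 / 2) * ∑ i, (y i - f i) ^ 2 + lam * ∑ j, |B.mulVec f j|

/-- The dual objective `G(w) = (1/2)‖y − Bᵀw‖₂²`. -/
noncomputable def tvDualG {P M : ℕ} (B : Matrix (Fin P) (Fin M) ℝ)
    (y : Fin M → ℝ) (w : Fin P → ℝ) : ℝ :=
  (1 / 2) * ∑ i, (y i - B.transpose.mulVec w i) ^ 2

/-!
A minimizer `ŵ` of the dual objective on the convex box satisfies the variational inequality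
`⟪Bᵀ(w - ŵ), y - Bᵀŵ⟫ ≤ 0` for every `w` in the box. Testing it at the vertex `λ sign(B f̂)`,
where `f̂ = y - Bᵀŵ`, gives `λ‖B f̂‖₁ ≤ ⟪ŵ, B f̂⟫`; then for every `f`, by completing the square
and Hölder's inequality,
`F(f̂) ≤ ½‖Bᵀŵ‖² + ⟪Bᵀŵ, f̂⟫ ≤ ½‖y - f‖² + ⟪Bᵀŵ, f⟫ ≤ F(f)`.
Adding the variational inequalities of two minimizers, each tested at the other, gives
`‖Bᵀŵ₁ - Bᵀŵ₂‖² ≤ 0`.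

The box `‖w‖_∞ ≤ λ` is the closed ball of radius `λ` for the sup norm of `Fin P → ℝ`.
-/

open Filter Metric Set Topology

section DotProduct

variable {ι κ : Type*} [Fintype ι] [Fintype κ]

theorem mem_closedBall_zero_iff_forall_abs_le {lam : ℝ} (hlam : 0 ≤ lam) {w : ι → ℝ} :
    w ∈ closedBall 0 lam ↔ ∀ j, |w j| ≤ lam := by
  simp only [mem_closedBall_zero_iff, pi_norm_le_iff_of_nonneg hlam, Real.norm_eq_abs]

theorem transpose_mulVec_dotProduct {R : Type*} [CommSemiring R] (B : Matrix κ ι R)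
    (w : κ → R) (v : ι → R) : (Bᵀ *ᵥ w) ⬝ᵥ v = w ⬝ᵥ (B *ᵥ v) := by
  rw [mulVec_transpose, dotProduct_mulVec]

theorem dotProduct_le_mul_sum_abs {lam : ℝ} {w : ι → ℝ} (hw : ∀ j, |w j| ≤ lam) (v : ι → ℝ) :
    w ⬝ᵥ v ≤ lam * ∑ j, |v j| := by
  rw [dotProduct, Finset.mul_sum]
  refine Finset.sum_le_sum fun j _ => ?_
  calc w j * v j ≤ |w j| * |v j| := by rw [← abs_mul]; exact le_abs_self _
    _ ≤ lam * |v j| := by gcongr; exact hw j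

theorem half_dotProduct_sub_add_dotProduct_le (y u f : ι → ℝ) :
    1 / 2 * ((y - (y - u)) ⬝ᵥ (y - (y - u))) + u ⬝ᵥ (y - u)
      ≤ 1 / 2 * ((y - f) ⬝ᵥ (y - f)) + u ⬝ᵥ f := by
  simp only [dotProduct, Pi.sub_apply, Finset.mul_sum, ← Finset.sum_add_distrib]
  exact Finset.sum_le_sum fun i _ => by nlinarith [sq_nonneg (y i - f i - u i)]

theorem dotProduct_nonpos_of_forall_le_sub_smul {v d : ι → ℝ}
    (h : ∀ t ∈ Ioc (0 : ℝ) 1, v ⬝ᵥ v ≤ (v - t • d) ⬝ᵥ (v - t • d)) : d ⬝ᵥ v ≤ 0 := by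
  have hle : ∀ t ∈ Ioc (0 : ℝ) 1, d ⬝ᵥ v ≤ t / 2 * (d ⬝ᵥ d) := by
    intro t ht
    have := h t ht
    simp only [sub_dotProduct, dotProduct_sub, smul_dotProduct, dotProduct_smul, smul_eq_mul,
      dotProduct_comm v d] at this
    nlinarith [ht.1]
  have hlim : Tendsto (fun t : ℝ => t / 2 * (d ⬝ᵥ d)) (𝓝[>] 0) (𝓝 0) := by
    have : Continuous fun t : ℝ => t / 2 * (d ⬝ᵥ d) := by fun_prop
    simpa using (this.tendsto 0).mono_left nhdsWithin_le_nhds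
  exact ge_of_tendsto hlim (eventually_of_mem (Ioc_mem_nhdsGT one_pos) hle)

end DotProduct

section TV

variable {P M : ℕ} (B : Matrix (Fin P) (Fin M) ℝ) (y : Fin M → ℝ)

theorem tvF_eq (lam : ℝ) (f : Fin M → ℝ) :
    tvF B lam y f = 1 / 2 * ((y - f) ⬝ᵥ (y - f)) + lam * ∑ j, |(B *ᵥ f) j| := by
  simp only [tvF, dotProduct, Pi.sub_apply, sq]

theorem tvDualG_eq (w : Fin P → ℝ) :
    tvDualG B y w = 1 / 2 * ((y - Bᵀ *ᵥ w) ⬝ᵥ (y - Bᵀ *ᵥ w)) := by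
  simp only [tvDualG, dotProduct, Pi.sub_apply, sq]

theorem continuous_tvDualG : Continuous (tvDualG B y) := by
  unfold tvDualG
  fun_prop

theorem tvDualG_variational_inequality {S : Set (Fin P → ℝ)} (hS : Convex ℝ S)
    {w w' : Fin P → ℝ} (hw : w ∈ S) (hmin : IsMinOn (tvDualG B y) S w) (hw' : w' ∈ S) :
    (Bᵀ *ᵥ (w' - w)) ⬝ᵥ (y - Bᵀ *ᵥ w) ≤ 0 := by
  refine dotProduct_nonpos_of_forall_le_sub_smul fun t ht => ?_
  have hle := isMinOn_iff.1 hmin _ (hS.add_smul_sub_mem hw hw' (Ioc_subset_Icc_self ht))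
  rw [tvDualG_eq, tvDualG_eq, mulVec_add, mulVec_smul, ← sub_sub] at hle
  linarith

theorem mul_sum_abs_le_dotProduct_of_isMinOn {lam : ℝ} {w : Fin P → ℝ}
    (hw : w ∈ closedBall 0 lam) (hmin : IsMinOn (tvDualG B y) (closedBall 0 lam) w) :
    lam * ∑ j, |(B *ᵥ (y - Bᵀ *ᵥ w)) j| ≤ w ⬝ᵥ (B *ᵥ (y - Bᵀ *ᵥ w)) := by
  set c := B *ᵥ (y - Bᵀ *ᵥ w)
  have hlam : 0 ≤ lam := nonempty_closedBall.1 ⟨w, hw⟩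
  set s : Fin P → ℝ := fun j => lam * SignType.sign (c j)
  have hs : s ∈ closedBall 0 lam := by
    refine (mem_closedBall_zero_iff_forall_abs_le hlam).2 fun j => ?_
    rw [abs_mul, abs_of_nonneg hlam]
    exact mul_le_of_le_one_right hlam (by rcases SignType.sign (c j) with _ | _ | _ <;> simp)
  have hvi := tvDualG_variational_inequality B y (convex_closedBall 0 lam) hw hmin hs
  rw [transpose_mulVec_dotProduct, sub_dotProduct] at hvi
  have hsc : s ⬝ᵥ c = lam * ∑ j, |c j| := by
    simp only [s, dotProduct, Finset.mul_sum, mul_assoc, sign_mul_self]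
  linarith

theorem tvF_le_of_isMinOn {lam : ℝ} {w : Fin P → ℝ} (hw : w ∈ closedBall 0 lam)
    (hmin : IsMinOn (tvDualG B y) (closedBall 0 lam) w) (f : Fin M → ℝ) :
    tvF B lam y (y - Bᵀ *ᵥ w) ≤ tvF B lam y f := by
  have hbox := (mem_closedBall_zero_iff_forall_abs_le (nonempty_closedBall.1 ⟨w, hw⟩)).1 hw
  calc tvF B lam y (y - Bᵀ *ᵥ w)
      ≤ 1 / 2 * ((y - (y - Bᵀ *ᵥ w)) ⬝ᵥ (y - (y - Bᵀ *ᵥ w))) + w ⬝ᵥ (B *ᵥ (y - Bᵀ *ᵥ w)) := by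
        rw [tvF_eq]; gcongr; exact mul_sum_abs_le_dotProduct_of_isMinOn B y hw hmin
    _ ≤ 1 / 2 * ((y - f) ⬝ᵥ (y - f)) + w ⬝ᵥ (B *ᵥ f) := by
        simpa only [transpose_mulVec_dotProduct] using
          half_dotProduct_sub_add_dotProduct_le y (Bᵀ *ᵥ w) f
    _ ≤ tvF B lam y f := by
        rw [tvF_eq]; gcongr; exact dotProduct_le_mul_sum_abs hbox _

theorem exists_isMinOn_tvDualG {lam : ℝ} (hlam : 0 ≤ lam) :
    ∃ w ∈ closedBall (0 : Fin P → ℝ) lam, IsMinOn (tvDualG B y) (closedBall 0 lam) w :=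
  (isCompact_closedBall 0 lam).exists_isMinOn (nonempty_closedBall.2 hlam)
    (continuous_tvDualG B y).continuousOn

theorem transpose_mulVec_eq_of_isMinOn {S : Set (Fin P → ℝ)} (hS : Convex ℝ S)
    {w₁ w₂ : Fin P → ℝ} (hw₁ : w₁ ∈ S) (hmin₁ : IsMinOn (tvDualG B y) S w₁)
    (hw₂ : w₂ ∈ S) (hmin₂ : IsMinOn (tvDualG B y) S w₂) :
    Bᵀ *ᵥ w₁ = Bᵀ *ᵥ w₂ := by
  have h₁ := tvDualG_variational_inequality B y hS hw₁ hmin₁ hw₂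
  have h₂ := tvDualG_variational_inequality B y hS hw₂ hmin₂ hw₁
  set u₁ := Bᵀ *ᵥ w₁
  set u₂ := Bᵀ *ᵥ w₂
  rw [mulVec_sub] at h₁ h₂
  have hsum : (u₂ - u₁) ⬝ᵥ (u₂ - u₁) = (u₂ - u₁) ⬝ᵥ (y - u₁) + (u₁ - u₂) ⬝ᵥ (y - u₂) := by
    simp only [sub_dotProduct, dotProduct_sub]; ring
  have hzero : (u₂ - u₁) ⬝ᵥ (u₂ - u₁) = 0 :=
    le_antisymm (by linarith) (Finset.sum_nonneg fun i _ => mul_self_nonneg _)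
  exact (sub_eq_zero.1 (dotProduct_self_eq_zero.1 hzero)).symm

end TV

/-- A minimizer `ŵ` of the dual objective over the box `{‖w‖_∞ ≤ λ}` exists,
and for every such minimizer the TV estimate satisfies `f̂_λ(y) = y − Bᵀŵ` (i.e. `y − Bᵀŵ`
minimizes the TV objective); in particular `Bᵀŵ` is the same vector for every dual
minimizer. -/
theorem tv_estimate_from_dual_minimizer
    (M P : ℕ) (y : Fin M → ℝ) (B : Matrix (Fin P) (Fin M) ℝ)
    (lam : ℝ) (hlam : 0 ≤ lam) :
    (∃ w : Fin P → ℝ, (∀ j, |w j| ≤ lam) ∧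
        ∀ w' : Fin P → ℝ, (∀ j, |w' j| ≤ lam) → tvDualG B y w ≤ tvDualG B y w') ∧
    (∀ w : Fin P → ℝ, (∀ j, |w j| ≤ lam) →
      (∀ w' : Fin P → ℝ, (∀ j, |w' j| ≤ lam) → tvDualG B y w ≤ tvDualG B y w') →
      ∀ f : Fin M → ℝ,
        tvF B lam y (y - B.transpose.mulVec w) ≤ tvF B lam y f) ∧
    (∀ w₁ w₂ : Fin P → ℝ,
      (∀ j, |w₁ j| ≤ lam) →
      (∀ w' : Fin P → ℝ, (∀ j, |w' j| ≤ lam) → tvDualG B y w₁ ≤ tvDualG B y w') →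
      (∀ j, |w₂ j| ≤ lam) →
      (∀ w' : Fin P → ℝ, (∀ j, |w' j| ≤ lam) → tvDualG B y w₂ ≤ tvDualG B y w') →
      B.transpose.mulVec w₁ = B.transpose.mulVec w₂) := by
  simp_rw [← mem_closedBall_zero_iff_forall_abs_le hlam, ← isMinOn_iff]
  refine ⟨?_, fun w hw hmin f => ?_, fun w₁ w₂ hw₁ hmin₁ hw₂ hmin₂ => ?_⟩
  · exact exists_isMinOn_tvDualG B y hlam
  · exact tvF_le_of_isMinOn B y hw hmin f
  · exact transpose_mulVec_eq_of_isMinOn B y (convex_closedBall 0 lam) hw₁ hmin₁ hw₂ hmin₂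
end

section
/- Let B be a real P×M matrix with B𝟙 = 0 and with {v ∈ ℝ^M : Σ_i v_i = 0} contained in the range of Bᵀ. Let y ∈ ℝ^M with mean ȳ = (1/M)Σ_i y_i, define Λ(y) = min{‖w‖_∞ : w ∈ ℝ^P, Bᵀw = y − ȳ𝟙}, and let λ ≥ 0. Then the TV estimate equals the best constant fit, f̂_λ(y) = ȳ𝟙, if and only if λ ≥ Λ(y). -/
open Matrix

/-- `Λ(y) = min{‖w‖_∞ : Bᵀw = y − ȳ𝟙}`, where `ȳ` is the mean of `y` and the norm on
`Fin P → ℝ` is the sup norm. -/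
noncomputable def tvLam {P M : ℕ} (B : Matrix (Fin P) (Fin M) ℝ) (y : Fin M → ℝ) : ℝ :=
  sInf ((fun w : Fin P → ℝ => ‖w‖) ''
    {w : Fin P → ℝ | B.transpose.mulVec w = fun i => y i - (∑ k, y k) / (M : ℝ)})

/-! With `c = ȳ𝟙` we have `Bc = 0`, hence `F(f) - F(c) = ½‖f - c‖² - ⟨y - c, f - c⟩ + λ‖Bf‖₁`.
If `y - c = Bᵀw` with `‖w‖_∞ ≤ λ`, Hölder gives `⟨y - c, f - c⟩ = ⟨w, Bf⟩ ≤ λ‖Bf‖₁`, so `c` is a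
minimiser; when `Λ(y) ≤ λ` such a `w` exists because the infimum defining `Λ(y)` is attained
(the feasible set is closed, and nonempty by the range hypothesis since `y - c` has zero sum).
Conversely, comparing `F(c)` with `F(c + t d)` and letting `t → 0⁺` gives
`⟨y - c, d⟩ ≤ λ‖Bd‖₁ = max {⟨Bᵀw, d⟩ : ‖w‖_∞ ≤ λ}` for every direction `d`, and Hahn–Banach
separation then puts `y - c` in the compact convex set `Bᵀ(closedBall 0 λ)`. -/

section DotProduct

variable {m : Type*} [Fintype m]

theorem dotProduct_le_norm_mul_sum_abs (w v : m → ℝ) : w ⬝ᵥ v ≤ ‖w‖ * ∑ j, |v j| := by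
  rw [Finset.mul_sum]
  refine Finset.sum_le_sum fun j _ => ?_
  calc w j * v j ≤ |w j| * |v j| := by rw [← abs_mul]; exact le_abs_self _
    _ ≤ ‖w‖ * |v j| := by gcongr; exact norm_le_pi_norm w j

theorem exists_norm_le_dotProduct_eq (v : m → ℝ) {r : ℝ} (hr : 0 ≤ r) :
    ∃ w : m → ℝ, ‖w‖ ≤ r ∧ w ⬝ᵥ v = r * ∑ j, |v j| := by
  refine ⟨fun j => r * SignType.sign (v j), ?_, ?_⟩
  · refine (pi_norm_le_iff_of_nonneg hr).2 fun j => ?_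
    rw [Real.norm_eq_abs, abs_mul, abs_of_nonneg hr]
    refine mul_le_of_le_one_right hr ?_
    rcases SignType.sign (v j) with _ | _ | _ <;> simp
  · simp only [dotProduct, Finset.mul_sum, mul_assoc, sign_mul_self]

theorem mem_of_forall_exists_dotProduct_le {K : Set (m → ℝ)} (hconv : Convex ℝ K)
    (hclosed : IsClosed K) {g : m → ℝ} (h : ∀ d, ∃ k ∈ K, g ⬝ᵥ d ≤ k ⬝ᵥ d) : g ∈ K := by
  classical
  by_contra hg
  obtain ⟨φ, u, hK, hgu⟩ := geometric_hahn_banach_closed_point hconv hclosed hg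
  have hφ : ∀ v, φ v = v ⬝ᵥ fun i => φ fun j => if i = j then 1 else 0 :=
    LinearMap.pi_apply_eq_sum_univ φ.toLinearMap
  obtain ⟨k, hk, hgk⟩ := h _
  have := hK k hk
  rw [hφ] at this hgu
  linarith

theorem mem_image_mulVec_closedBall_of_forall_dotProduct_le {n : Type*} [Fintype n]
    (B : Matrix m n ℝ) {r : ℝ} (hr : 0 ≤ r) {g : n → ℝ}
    (h : ∀ d, g ⬝ᵥ d ≤ r * ∑ j, |(B *ᵥ d) j|) :
    g ∈ (Bᵀ *ᵥ ·) '' Metric.closedBall 0 r := by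
  classical
  refine mem_of_forall_exists_dotProduct_le ((convex_closedBall 0 r).linear_image Bᵀ.mulVecLin)
    ((isCompact_closedBall 0 r).image (by fun_prop)).isClosed fun d => ?_
  obtain ⟨w, hw, hwd⟩ := exists_norm_le_dotProduct_eq (B *ᵥ d) hr
  refine ⟨Bᵀ *ᵥ w, ⟨w, mem_closedBall_zero_iff.2 hw, rfl⟩, ?_⟩
  rw [mulVec_transpose, ← dotProduct_mulVec, hwd]
  exact h d

end DotProduct

theorem sum_sub_sum_div_card_eq_zero {ι : Type*} [Fintype ι] (y : ι → ℝ) :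
    ∑ i, (y i - (∑ k, y k) / Fintype.card ι) = 0 := by
  rw [Finset.sum_sub_distrib, Finset.sum_const, nsmul_eq_mul, Finset.card_univ]
  rcases eq_or_ne (Fintype.card ι : ℝ) 0 with h | h
  · rw [Nat.cast_eq_zero, Fintype.card_eq_zero_iff] at h
    simp
  · field_simp; ring

theorem le_of_forall_pos_le_add_mul {a b s : ℝ} (hs : 0 ≤ s) (h : ∀ t, 0 < t → a ≤ b + t * s) :
    a ≤ b := by
  refine le_of_forall_pos_le_add fun ε hε => (h (ε / (s + 1)) (by positivity)).trans ?_
  gcongr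
  rw [div_mul_eq_mul_div, div_le_iff₀ (by positivity)]
  nlinarith

theorem Matrix.mulVec_const_eq_zero {m n : Type*} [Fintype n] {B : Matrix m n ℝ}
    (hB1 : B *ᵥ (fun _ => (1 : ℝ)) = 0) (t : ℝ) : B *ᵥ (fun _ => t) = 0 := by
  have : (fun _ => t) = t • fun _ : n => (1 : ℝ) := by ext; simp
  rw [this, mulVec_smul, hB1, smul_zero]

section TV

variable {P M : ℕ} {B : Matrix (Fin P) (Fin M) ℝ} {lam : ℝ} {y c : Fin M → ℝ}

theorem tvF_sub_tvF (hc : B *ᵥ c = 0) (f : Fin M → ℝ) :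
    tvF B lam y f - tvF B lam y c =
      (1 / 2) * ((f - c) ⬝ᵥ (f - c)) - (y - c) ⬝ᵥ (f - c) + lam * ∑ j, |(B *ᵥ f) j| := by
  have hsq : ∀ i, (y i - f i) ^ 2 =
      (y i - c i) ^ 2 + (f i - c i) * (f i - c i) - 2 * ((y i - c i) * (f i - c i)) :=
    fun i => by ring
  simp only [tvF, hc, Pi.zero_apply, abs_zero, Finset.sum_const_zero, mul_zero, add_zero,
    dotProduct, Pi.sub_apply, hsq, Finset.sum_add_distrib, Finset.sum_sub_distrib,
    ← Finset.mul_sum]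
  ring

theorem tvF_le_of_mulVec_transpose_eq (hc : B *ᵥ c = 0) {w : Fin P → ℝ}
    (hw : Bᵀ *ᵥ w = y - c) (hwlam : ‖w‖ ≤ lam) (f : Fin M → ℝ) :
    tvF B lam y c ≤ tvF B lam y f := by
  have hdual : (y - c) ⬝ᵥ (f - c) = w ⬝ᵥ (B *ᵥ f) := by
    rw [← hw, mulVec_transpose, ← dotProduct_mulVec, mulVec_sub, hc, sub_zero]
  have hHolder : (y - c) ⬝ᵥ (f - c) ≤ lam * ∑ j, |(B *ᵥ f) j| :=
    hdual ▸ (dotProduct_le_norm_mul_sum_abs w _).trans (by gcongr)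
  have hsq : 0 ≤ (f - c) ⬝ᵥ (f - c) := Finset.sum_nonneg fun i _ => mul_self_nonneg _
  linarith [tvF_sub_tvF (lam := lam) (y := y) hc f]

theorem dotProduct_le_of_forall_tvF_le (hc : B *ᵥ c = 0)
    (hmin : ∀ f, tvF B lam y c ≤ tvF B lam y f) (d : Fin M → ℝ) :
    (y - c) ⬝ᵥ d ≤ lam * ∑ j, |(B *ᵥ d) j| := by
  have hdd : 0 ≤ d ⬝ᵥ d := Finset.sum_nonneg fun i _ => mul_self_nonneg (d i)
  refine le_of_forall_pos_le_add_mul (s := (1 / 2) * (d ⬝ᵥ d)) (by positivity) fun t ht => ?_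
  have hdiff := tvF_sub_tvF (lam := lam) (y := y) hc (c + t • d)
  have habs : ∑ j, |(B *ᵥ (c + t • d)) j| = t * ∑ j, |(B *ᵥ d) j| := by
    simp only [mulVec_add, mulVec_smul, hc, zero_add, Pi.smul_apply, smul_eq_mul, abs_mul,
      abs_of_pos ht, Finset.mul_sum]
  simp only [add_sub_cancel_left, dotProduct_smul, smul_dotProduct, smul_eq_mul, habs] at hdiff
  exact le_of_mul_le_mul_left (by linarith [hmin (c + t • d)]) ht

theorem tvLam_le_norm {w : Fin P → ℝ}
    (hw : Bᵀ *ᵥ w = fun i => y i - (∑ k, y k) / (M : ℝ)) : tvLam B y ≤ ‖w‖ :=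
  csInf_le ⟨0, by rintro _ ⟨v, -, rfl⟩; exact norm_nonneg v⟩ ⟨w, hw, rfl⟩

theorem exists_norm_eq_tvLam
    (hfeas : ∃ w, Bᵀ *ᵥ w = fun i => y i - (∑ k, y k) / (M : ℝ)) :
    ∃ w, Bᵀ *ᵥ w = (fun i => y i - (∑ k, y k) / (M : ℝ)) ∧ ‖w‖ = tvLam B y := by
  have hclosed : IsClosed {w : Fin P → ℝ | Bᵀ *ᵥ w = fun i => y i - (∑ k, y k) / (M : ℝ)} :=
    isClosed_eq (by fun_prop) continuous_const
  obtain ⟨w, hw, hdist⟩ := hclosed.exists_infDist_eq_dist hfeas 0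
  refine ⟨w, hw, .symm <| IsLeast.csInf_eq ⟨⟨w, hw, rfl⟩, ?_⟩⟩
  rintro _ ⟨v, hv, rfl⟩
  simpa [hdist] using Metric.infDist_le_dist_of_mem (x := 0) hv

end TV

theorem tv_constant_fit_iff_lam_ge_general
    (M P : ℕ) (B : Matrix (Fin P) (Fin M) ℝ)
    (hB1 : B.mulVec (fun _ => (1 : ℝ)) = 0)
    (hrange : {v : Fin M → ℝ | ∑ i, v i = 0} ⊆ Set.range B.transpose.mulVec)
    (y : Fin M → ℝ) (lam : ℝ) (hlam : 0 ≤ lam) :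
    (∀ f : Fin M → ℝ,
        tvF B lam y (fun _ => (∑ k, y k) / (M : ℝ)) ≤ tvF B lam y f) ↔
      tvLam B y ≤ lam := by
  have hc := B.mulVec_const_eq_zero hB1 ((∑ k, y k) / (M : ℝ))
  constructor
  · intro hmin
    obtain ⟨w, hw, hwg⟩ := mem_image_mulVec_closedBall_of_forall_dotProduct_le B hlam
      (dotProduct_le_of_forall_tvF_le hc hmin)
    exact (tvLam_le_norm hwg).trans (mem_closedBall_zero_iff.1 hw)
  · intro hle
    have hmean : (fun i => y i - (∑ k, y k) / (M : ℝ)) ∈ {v : Fin M → ℝ | ∑ i, v i = 0} := by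
      simpa using sum_sub_sum_div_card_eq_zero y
    obtain ⟨w, hwg, hw⟩ := exists_norm_eq_tvLam (hrange hmean)
    exact tvF_le_of_mulVec_transpose_eq hc hwg (hw ▸ hle)

/-- If `B𝟙 = 0` and the mean-zero subspace is contained in the range of `Bᵀ`,
then the TV estimate equals the best constant fit `ȳ𝟙` if and only if `λ ≥ Λ(y)`. -/
theorem tv_constant_fit_iff_lam_ge
    (M P : ℕ) (hM : 1 ≤ M) (B : Matrix (Fin P) (Fin M) ℝ)
    (hB1 : B.mulVec (fun _ => (1 : ℝ)) = 0)
    (hrange : {v : Fin M → ℝ | ∑ i, v i = 0} ⊆ Set.range B.transpose.mulVec)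
    (y : Fin M → ℝ) (lam : ℝ) (hlam : 0 ≤ lam) :
    (∀ f : Fin M → ℝ,
        tvF B lam y (fun _ => (∑ k, y k) / (M : ℝ)) ≤ tvF B lam y f) ↔
      tvLam B y ≤ lam :=
  tv_constant_fit_iff_lam_ge_general M P B hB1 hrange y lam hlam
end

section
/- Let N ≥ 2, σ > 0, μ ∈ ℝ, let Y₁,…,Y_N be i.i.d. N(μ,σ²) with sample mean Ȳ, and let W_i = Σ_{k=1}^i (Y_k − Ȳ). Then for every c > 0, ℙ( max_{1≤i≤N−1} W_i > σ√N·c ) ≤ exp(−2c²). -/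
/-!
Let `a = σ √N c`, let `P` be the law of `Y`, and for `i < N` let
`dᵢ = 𝟙[k ≥ i] / (N - i) - 𝟙[k = N - 1]`. Let `D` be the density with respect to `P` of the law
of `Y + 2a d₀`. Split the event `{max W > a}` according to the first index `i` with `W_i > a`.
For each `i` the density factors as `D = M_i · D_i`, where `D_i` is the density of the shift by
`2a dᵢ` and `M_i` depends on `W_i` only; `dᵢ` vanishes on the first `i` coordinates and has total
sum zero, so this shift leaves `W_0, …, W_i`, hence both the first-passage event and `M_i`,
unchanged. Therefore the integral of `D` over the first passage at `i` equals that of `M_i`, which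
is at least `exp(2c²)` times its probability because `W_i > a` there. Summing over the disjoint
first-passage events gives `exp(2c²) · P(max W > a) ≤ ∫ D dP = 1`. This is optional stopping for
the likelihood-ratio martingale `M_i = E[D | Y₁, …, Y_i]`, carried out by hand.
-/

open MeasureTheory ProbabilityTheory Finset

open scoped ENNReal NNReal

theorem MeasureTheory.Measure.pi_withDensity {ι : Type*} [Fintype ι] {α : ι → Type*}
    [∀ i, MeasurableSpace (α i)] (μ : ∀ i, Measure (α i)) [∀ i, IsProbabilityMeasure (μ i)]
    {f : ∀ i, α i → ℝ≥0∞} (hf : ∀ i, Measurable (f i))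
    [∀ i, SigmaFinite ((μ i).withDensity (f i))] :
    Measure.pi (fun i => (μ i).withDensity (f i))
      = (Measure.pi μ).withDensity (fun x => ∏ i, f i (x i)) := by
  refine Measure.pi_eq (μ := fun i => (μ i).withDensity (f i)) fun s hs => ?_
  have hbox : (Set.univ.pi s).indicator (fun x => ∏ i, f i (x i))
      = fun x => ∏ i, (s i).indicator (f i) (x i) := by
    funext x
    by_cases h : x ∈ Set.univ.pi s
    · rw [Set.indicator_of_mem h]
      exact prod_congr rfl fun i _ => (Set.indicator_of_mem (h i trivial) _).symm
    · rw [Set.indicator_of_notMem h]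
      obtain ⟨i, -, hi⟩ := not_forall₂.mp h
      exact (prod_eq_zero (mem_univ i) (Set.indicator_of_notMem hi _)).symm
  rw [withDensity_apply _ (.univ_pi hs), ← lintegral_indicator (.univ_pi hs), hbox,
    lintegral_prod_eq_prod_lintegral_of_indepFun _ _
      (iIndepFun_pi fun i => ((hf i).indicator (hs i)).aemeasurable)
      fun i => ((hf i).indicator (hs i)).comp (measurable_pi_apply i)]
  refine prod_congr rfl fun i _ => ?_
  rw [withDensity_apply _ (hs i), ← lintegral_indicator (hs i),
    ← (measurePreserving_eval μ i).lintegral_comp ((hf i).indicator (hs i))]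

noncomputable def gaussianTilt (μ : ℝ) (v : ℝ≥0) (t x : ℝ) : ℝ :=
  Real.exp (t * (x - μ) / v - t ^ 2 / (2 * v))

lemma measurable_gaussianTilt (μ : ℝ) (v : ℝ≥0) (t : ℝ) : Measurable (gaussianTilt μ v t) := by
  unfold gaussianTilt
  fun_prop

lemma gaussianPDFReal_mul_gaussianTilt (μ : ℝ) {v : ℝ≥0} (hv : v ≠ 0) (t x : ℝ) :
    gaussianPDFReal μ v x * gaussianTilt μ v t x = gaussianPDFReal (μ + t) v x := by
  rw [gaussianPDFReal, gaussianPDFReal, gaussianTilt, mul_assoc, ← Real.exp_add]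
  congr 2
  field_simp
  ring

lemma withDensity_gaussianTilt (μ : ℝ) {v : ℝ≥0} (hv : v ≠ 0) (t : ℝ) :
    (gaussianReal μ v).withDensity (fun x => ENNReal.ofReal (gaussianTilt μ v t x))
      = gaussianReal (μ + t) v := by
  rw [gaussianReal_of_var_ne_zero _ hv, gaussianReal_of_var_ne_zero _ hv,
    ← withDensity_mul _ (measurable_gaussianPDF _ _) (measurable_gaussianTilt μ v t).ennreal_ofReal]
  congr 1
  ext x
  simp only [Pi.mul_apply, gaussianPDF, ← ENNReal.ofReal_mul (gaussianPDFReal_nonneg _ _ _),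
    gaussianPDFReal_mul_gaussianTilt μ hv]

section PiGaussianTilt

variable {ι : Type*} [Fintype ι]

noncomputable def piGaussianTilt (μ : ℝ) (v : ℝ≥0) (w y : ι → ℝ) : ℝ≥0∞ :=
  ∏ k, ENNReal.ofReal (gaussianTilt μ v (w k) (y k))

lemma measurable_piGaussianTilt (μ : ℝ) (v : ℝ≥0) (w : ι → ℝ) :
    Measurable (piGaussianTilt μ v w) := by
  unfold piGaussianTilt gaussianTilt
  fun_prop

lemma piGaussianTilt_eq_mul (μ : ℝ) (v : ℝ≥0) (p q y : ι → ℝ) :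
    piGaussianTilt μ v p y = ENNReal.ofReal (Real.exp
      ((∑ k, ((p k - q k) * (y k - μ) - (p k ^ 2 - q k ^ 2) / 2)) / v))
        * piGaussianTilt μ v q y := by
  simp only [piGaussianTilt, sum_div, Real.exp_sum,
    ENNReal.ofReal_prod_of_nonneg fun k _ => (Real.exp_pos _).le, ← prod_mul_distrib]
  refine prod_congr rfl fun k _ => ?_
  rw [gaussianTilt, gaussianTilt, ← ENNReal.ofReal_mul (Real.exp_pos _).le, ← Real.exp_add]
  congr 2
  ring

lemma withDensity_piGaussianTilt (μ : ℝ) {v : ℝ≥0} (hv : v ≠ 0) (w : ι → ℝ) :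
    (Measure.pi fun _ : ι => gaussianReal μ v).withDensity (piGaussianTilt μ v w)
      = (Measure.pi fun _ : ι => gaussianReal μ v).map (· + w) := by
  change _ = Measure.map (fun (y : ι → ℝ) k => y k + w k) _
  rw [show piGaussianTilt μ v w = fun y => ∏ k, ENNReal.ofReal (gaussianTilt μ v (w k) (y k))
      from rfl,
    ← Measure.pi_withDensity _ fun k => (measurable_gaussianTilt μ v (w k)).ennreal_ofReal]
  simp_rw [withDensity_gaussianTilt μ hv, ← gaussianReal_map_add_const]
  rw [Measure.pi_map_pi fun k => (measurable_add_const (w k)).aemeasurable]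

lemma lintegral_piGaussianTilt_mul (μ : ℝ) {v : ℝ≥0} (hv : v ≠ 0) (w : ι → ℝ)
    {G : (ι → ℝ) → ℝ≥0∞} (hG : Measurable G) :
    ∫⁻ y, piGaussianTilt μ v w y * G y ∂(Measure.pi fun _ : ι => gaussianReal μ v)
      = ∫⁻ y, G (y + w) ∂(Measure.pi fun _ : ι => gaussianReal μ v) := by
  rw [← lintegral_map hG (measurable_add_const w), ← withDensity_piGaussianTilt μ hv]
  exact (lintegral_withDensity_eq_lintegral_mul _ (measurable_piGaussianTilt μ v w) hG).symm

end PiGaussianTilt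

lemma biUnion_range_disjointed {α : Type*} (f : ℕ → Set α) (n : ℕ) :
    ⋃ i ∈ range n, disjointed f i = ⋃ i ∈ range n, f i := by
  cases n with
  | zero => simp
  | succ n =>
    rw [biUnion_range_succ_disjointed, partialSups_eq_biSup]
    simp

theorem mul_measure_biUnion_le_lintegral {α ι : Type*} [MeasurableSpace α] {μ : Measure α}
    {s : Finset ι} {E : ι → Set α} (hd : Set.PairwiseDisjoint ↑s E)
    (hm : ∀ i ∈ s, MeasurableSet (E i)) {D : α → ℝ≥0∞} {r : ℝ≥0∞}
    (h : ∀ i ∈ s, r * μ (E i) ≤ ∫⁻ x in E i, D x ∂μ) :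
    r * μ (⋃ i ∈ s, E i) ≤ ∫⁻ x, D x ∂μ :=
  calc r * μ (⋃ i ∈ s, E i) = ∑ i ∈ s, r * μ (E i) := by
        rw [measure_biUnion_finset hd hm, mul_sum]
    _ ≤ ∑ i ∈ s, ∫⁻ x in E i, D x ∂μ := sum_le_sum h
    _ = ∫⁻ x in ⋃ i ∈ s, E i, D x ∂μ := (lintegral_biUnion_finset hd hm D).symm
    _ ≤ ∫⁻ x, D x ∂μ := setLIntegral_le_lintegral _ _

section Bridge

variable {N i : ℕ}

lemma sum_ite_val_lt_const (hi : i ≤ N) (c : ℝ) :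
    ∑ k : Fin N, (if (k : ℕ) < i then c else 0) = i * c := by
  rw [sum_ite, sum_const_zero, add_zero, sum_const, Fin.card_filter_val_lt, min_eq_right hi,
    nsmul_eq_mul]

lemma sum_ite_val_lt_add_sum_ite_le (i : ℕ) (f : Fin N → ℝ) :
    ∑ k : Fin N, (if (k : ℕ) < i then f k else 0) + ∑ k : Fin N, (if i ≤ (k : ℕ) then f k else 0)
      = ∑ k, f k := by
  rw [← sum_add_distrib]
  refine sum_congr rfl fun k _ => ?_
  split_ifs <;> first | omega | simp

lemma sum_ite_le_val_const (hi : i ≤ N) (c : ℝ) :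
    ∑ k : Fin N, (if i ≤ (k : ℕ) then c else 0) = ((N : ℝ) - i) * c := by
  have h := sum_ite_val_lt_add_sum_ite_le i fun _ : Fin N => c
  rw [sum_ite_val_lt_const hi, sum_const, card_univ, Fintype.card_fin, nsmul_eq_mul] at h
  linarith

lemma sum_ite_val_eq_pred_const (hN : 0 < N) (c : ℝ) :
    ∑ k : Fin N, (if (k : ℕ) = N - 1 then c else 0) = c := by
  rw [Fin.sum_univ_eq_sum_range (fun k => if k = N - 1 then c else 0), sum_ite_eq',
    if_pos (mem_range.mpr (by omega))]

noncomputable def bridge (j : ℕ) (y : Fin N → ℝ) : ℝ :=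
  ∑ k : Fin N, if (k : ℕ) < j then y k - (∑ m, y m) / N else 0

lemma measurable_bridge (j : ℕ) : Measurable (bridge (N := N) j) := by
  refine Finset.measurable_sum _ fun k _ => ?_
  split_ifs
  · fun_prop
  · exact measurable_const

lemma bridge_eq (hi : i ≤ N) (y : Fin N → ℝ) :
    bridge i y = ∑ k : Fin N, (if (k : ℕ) < i then y k else 0) - i * ((∑ k, y k) / N) := by
  rw [bridge, ← sum_ite_val_lt_const hi, ← sum_sub_distrib]
  refine sum_congr rfl fun k _ => ?_
  split_ifs <;> simp

noncomputable def bridgeDir (N i : ℕ) (k : Fin N) : ℝ :=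
  (if i ≤ (k : ℕ) then ((N : ℝ) - i)⁻¹ else 0) - if (k : ℕ) = N - 1 then 1 else 0

lemma bridgeDir_of_lt (hi : i < N) {k : Fin N} (hk : (k : ℕ) < i) : bridgeDir N i k = 0 := by
  simp [bridgeDir, show ¬ i ≤ (k : ℕ) by omega, show (k : ℕ) ≠ N - 1 by omega]

lemma sum_bridgeDir (hi : i < N) : ∑ k, bridgeDir N i k = 0 := by
  have hNi : (N : ℝ) - i ≠ 0 := sub_ne_zero.mpr (by exact_mod_cast hi.ne')
  simp only [bridgeDir, sum_sub_distrib, sum_ite_le_val_const hi.le,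
    sum_ite_val_eq_pred_const (show 0 < N by omega), mul_inv_cancel₀ hNi, sub_self]

lemma sum_bridgeDir_sq (hi : i < N) : ∑ k, bridgeDir N i k ^ 2 = 1 - ((N : ℝ) - i)⁻¹ := by
  have hsq : ∀ k : Fin N, bridgeDir N i k ^ 2
      = (if i ≤ (k : ℕ) then ((N : ℝ) - i)⁻¹ ^ 2 else 0)
        + if (k : ℕ) = N - 1 then 1 - 2 * ((N : ℝ) - i)⁻¹ else 0 := by
    intro k
    unfold bridgeDir
    by_cases hk : (k : ℕ) = N - 1
    · simp only [hk, if_pos (show i ≤ N - 1 by omega), if_true]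
      ring
    · simp only [hk, if_false]
      split_ifs <;> ring
  rw [sum_congr rfl fun k _ => hsq k, sum_add_distrib, sum_ite_le_val_const hi.le,
    sum_ite_val_eq_pred_const (by omega)]
  field_simp
  ring

lemma sum_bridgeDir_zero_sub_mul (hi : i < N) (y : Fin N → ℝ) :
    ∑ k, (bridgeDir N 0 k - bridgeDir N i k) * y k = bridge i y / ((N : ℝ) - i) := by
  have hNi : (N : ℝ) - i ≠ 0 := sub_ne_zero.mpr (by exact_mod_cast hi.ne')
  have hN : (N : ℝ) ≠ 0 := by exact_mod_cast (show N ≠ 0 by omega)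
  have hdiff : ∀ k : Fin N, (bridgeDir N 0 k - bridgeDir N i k) * y k
      = y k / N - (if i ≤ (k : ℕ) then y k else 0) / ((N : ℝ) - i) := by
    intro k
    simp only [bridgeDir, zero_le, if_true, CharP.cast_eq_zero, sub_zero]
    split_ifs <;> ring
  have hsplit := sum_ite_val_lt_add_sum_ite_le i y
  rw [sum_congr rfl fun k _ => hdiff k, sum_sub_distrib, ← sum_div, ← sum_div, bridge_eq hi.le]
  field_simp
  linear_combination -(N : ℝ) * hsplit

lemma bridge_add_smul_bridgeDir (hi : i < N) {j : ℕ} (hj : j ≤ i) (t : ℝ) (y : Fin N → ℝ) :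
    bridge j (y + t • bridgeDir N i) = bridge j y := by
  have hsum : ∑ m, (y + t • bridgeDir N i) m = ∑ m, y m := by
    simp [sum_add_distrib, ← mul_sum, sum_bridgeDir hi]
  unfold bridge
  rw [hsum]
  refine sum_congr rfl fun k _ => ?_
  split_ifs with hk
  · simp [bridgeDir_of_lt hi (hk.trans_le hj)]
  · rfl

noncomputable def bridgeLikelihood (N i : ℕ) (v : ℝ≥0) (t : ℝ) (y : Fin N → ℝ) : ℝ≥0∞ :=
  ENNReal.ofReal (Real.exp
    ((t * (bridge i y / ((N : ℝ) - i)) - t ^ 2 / 2 * (((N : ℝ) - i)⁻¹ - (N : ℝ)⁻¹)) / v))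

lemma measurable_bridgeLikelihood (N i : ℕ) (v : ℝ≥0) (t : ℝ) :
    Measurable (bridgeLikelihood N i v t) := by
  have := measurable_bridge (N := N) i
  unfold bridgeLikelihood
  fun_prop

lemma bridgeLikelihood_add_smul_bridgeDir (hi : i < N) (v : ℝ≥0) (t s : ℝ) (y : Fin N → ℝ) :
    bridgeLikelihood N i v t (y + s • bridgeDir N i) = bridgeLikelihood N i v t y := by
  rw [bridgeLikelihood, bridgeLikelihood, bridge_add_smul_bridgeDir hi le_rfl]

lemma piGaussianTilt_smul_bridgeDir_zero (hi : i < N) (μ : ℝ) (v : ℝ≥0) (t : ℝ)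
    (y : Fin N → ℝ) :
    piGaussianTilt μ v (t • bridgeDir N 0) y
      = bridgeLikelihood N i v t y * piGaussianTilt μ v (t • bridgeDir N i) y := by
  rw [piGaussianTilt_eq_mul μ v _ (t • bridgeDir N i), bridgeLikelihood]
  congr 4
  have hterm : ∀ k, ((t • bridgeDir N 0) k - (t • bridgeDir N i) k) * (y k - μ)
      - ((t • bridgeDir N 0) k ^ 2 - (t • bridgeDir N i) k ^ 2) / 2
      = t * ((bridgeDir N 0 k - bridgeDir N i k) * y k) - t * μ * bridgeDir N 0 k
        + t * μ * bridgeDir N i k - t ^ 2 / 2 * (bridgeDir N 0 k ^ 2 - bridgeDir N i k ^ 2) := by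
    intro k
    simp only [Pi.smul_apply, smul_eq_mul]
    ring
  simp only [sum_congr rfl fun k _ => hterm k, sum_sub_distrib, sum_add_distrib, ← mul_sum,
    sum_bridgeDir_zero_sub_mul hi, sum_bridgeDir hi, sum_bridgeDir (show 0 < N by omega),
    sum_bridgeDir_sq hi, sum_bridgeDir_sq (show 0 < N by omega), Nat.cast_zero, sub_zero]
  ring

lemma ofReal_exp_le_bridgeLikelihood (hi : i < N) {v : ℝ≥0} (hv : v ≠ 0) {a : ℝ} (ha : 0 ≤ a)
    {y : Fin N → ℝ} (hy : a ≤ bridge i y) :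
    ENNReal.ofReal (Real.exp (2 * a ^ 2 / (N * v))) ≤ bridgeLikelihood N i v (2 * a) y := by
  have hNi : (0 : ℝ) < N - i := sub_pos.mpr (by exact_mod_cast hi)
  have hv' : (0 : ℝ) < v := by positivity
  have hstep : 2 * a * a / (N - i) ≤ 2 * a * bridge i y / (N - i) := by gcongr
  refine ENNReal.ofReal_le_ofReal (Real.exp_le_exp.mpr ?_)
  rw [← div_div]
  refine div_le_div_of_nonneg_right ?_ hv'.le
  have hexp : 2 * a * (bridge i y / ((N : ℝ) - i))
        - (2 * a) ^ 2 / 2 * (((N : ℝ) - i)⁻¹ - (N : ℝ)⁻¹)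
      = 2 * a * bridge i y / (N - i) - 2 * a * a / (N - i) + 2 * a ^ 2 / N := by
    ring
  linarith

end Bridge

section Tail

variable {N i : ℕ} (μ : ℝ) {v : ℝ≥0} {a : ℝ}

lemma mul_measure_disjointed_bridge_gt_le (hv : v ≠ 0) (ha : 0 ≤ a) (hi : i < N) :
    ENNReal.ofReal (Real.exp (2 * a ^ 2 / (N * v)))
        * (Measure.pi fun _ : Fin N => gaussianReal μ v)
            (disjointed (fun j => {y | a < bridge j y}) i)
      ≤ ∫⁻ y in disjointed (fun j => {y | a < bridge j y}) i,
          piGaussianTilt μ v ((2 * a) • bridgeDir N 0) y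
          ∂(Measure.pi fun _ : Fin N => gaussianReal μ v) := by
  set P := Measure.pi fun _ : Fin N => gaussianReal μ v
  set E := disjointed (fun j => {y : Fin N → ℝ | a < bridge j y}) i
  set M := bridgeLikelihood N i v (2 * a)
  set w := (2 * a) • bridgeDir N i
  have hEm : MeasurableSet E :=
    .disjointed (fun j => measurableSet_lt measurable_const (measurable_bridge j)) i
  have hE_add : ∀ y, y + w ∈ E ↔ y ∈ E := fun y => by
    simp only [E, w, disjointed_eq_inter_compl, Set.mem_inter_iff, Set.mem_iInter,
      Set.mem_compl_iff, Set.mem_ofPred_eq, bridge_add_smul_bridgeDir hi le_rfl]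
    refine and_congr_right fun _ => forall₂_congr fun j hj => ?_
    rw [bridge_add_smul_bridgeDir hi hj.le]
  have hM_ge : ∀ y ∈ E, ENNReal.ofReal (Real.exp (2 * a ^ 2 / (N * v))) ≤ M y := fun y hy =>
    ofReal_exp_le_bridgeLikelihood hi hv ha (disjointed_subset _ i hy).le
  have hMm : Measurable M := measurable_bridgeLikelihood N i v (2 * a)
  calc ENNReal.ofReal (Real.exp (2 * a ^ 2 / (N * v))) * P E
      = ∫⁻ _ in E, ENNReal.ofReal (Real.exp (2 * a ^ 2 / (N * v))) ∂P :=
        (setLIntegral_const E _).symm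
    _ ≤ ∫⁻ y in E, M y ∂P := setLIntegral_mono hMm hM_ge
    _ = ∫⁻ y, E.indicator M (y + w) ∂P := by
      rw [← lintegral_indicator hEm]
      refine lintegral_congr fun y => ?_
      classical
      simp only [Set.indicator_apply, hE_add, M, w, bridgeLikelihood_add_smul_bridgeDir hi]
    _ = ∫⁻ y, piGaussianTilt μ v w y * E.indicator M y ∂P :=
      (lintegral_piGaussianTilt_mul μ hv w (hMm.indicator hEm)).symm
    _ = ∫⁻ y in E, piGaussianTilt μ v ((2 * a) • bridgeDir N 0) y ∂P := by
      simp_rw [← lintegral_indicator hEm, ← Set.indicator_mul_right,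
        mul_comm (piGaussianTilt _ _ w _), M, w, ← piGaussianTilt_smul_bridgeDir_zero hi]

theorem pi_gaussianReal_bridge_tail_le (hv : v ≠ 0) (ha : 0 ≤ a) (N : ℕ) :
    (Measure.pi fun _ : Fin N => gaussianReal μ v) (⋃ i ∈ range N, {y | a < bridge i y})
      ≤ ENNReal.ofReal (Real.exp (-(2 * a ^ 2 / (N * v)))) := by
  have hD : ∫⁻ y, piGaussianTilt μ v ((2 * a) • bridgeDir N 0) y
      ∂(Measure.pi fun _ : Fin N => gaussianReal μ v) = 1 := by
    simpa using
      lintegral_piGaussianTilt_mul μ hv ((2 * a) • bridgeDir N 0) (G := 1) measurable_const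
  have h := mul_measure_biUnion_le_lintegral
    ((disjoint_disjointed fun j => {y : Fin N → ℝ | a < bridge j y}).set_pairwise _)
    (fun i _ => .disjointed (fun j => measurableSet_lt measurable_const (measurable_bridge j)) i)
    fun i hi => mul_measure_disjointed_bridge_gt_le μ hv ha (mem_range.mp hi)
  rw [hD, biUnion_range_disjointed, mul_comm, ← ENNReal.le_inv_iff_mul_le] at h
  rwa [Real.exp_neg, ENNReal.ofReal_inv_of_pos (Real.exp_pos _)]

end Tail

/-- for `Y₁,…,Y_N` i.i.d. `N(μ,σ²)` with sample mean `Ȳ` and discrete bridge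
`Wᵢ = Σ_{k=1}^i (Y_k − Ȳ)` (`i = 1,…,N−1`), for every `c > 0`,
`ℙ(max_{1≤i≤N−1} Wᵢ > σ√N·c) ≤ exp(−2c²)`. -/
theorem discrete_bridge_one_sided_tail_bound
    (N : ℕ) (hN : 2 ≤ N) (σ μ : ℝ) (hσ : 0 < σ) (c : ℝ) (hc : 0 < c) :
    (Measure.pi fun _ : Fin N => gaussianReal μ ⟨σ ^ 2, sq_nonneg σ⟩)
        {ω : Fin N → ℝ | ∃ i : ℕ, 1 ≤ i ∧ i ≤ N - 1 ∧
          σ * Real.sqrt N * c <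
            ∑ k : Fin N, if (k : ℕ) < i then ω k - (∑ m, ω m) / (N : ℝ) else 0} ≤
      ENNReal.ofReal (Real.exp (-2 * c ^ 2)) := by
  have hv : (⟨σ ^ 2, sq_nonneg σ⟩ : ℝ≥0) ≠ 0 := fun h =>
    (pow_pos hσ 2).ne' (congrArg Subtype.val h)
  have hN0 : (0 : ℝ) < N := by exact_mod_cast (show 0 < N by omega)
  have hexponent : 2 * (σ * Real.sqrt N * c) ^ 2 / (N * σ ^ 2) = 2 * c ^ 2 := by
    rw [mul_pow, mul_pow, Real.sq_sqrt hN0.le]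
    field_simp
  have hsub : {ω : Fin N → ℝ | ∃ i : ℕ, 1 ≤ i ∧ i ≤ N - 1 ∧ σ * Real.sqrt N * c < bridge i ω}
      ⊆ ⋃ i ∈ range N, {y | σ * Real.sqrt N * c < bridge i y} :=
    fun y ⟨i, hi, hiN, hy⟩ => Set.mem_biUnion (mem_range.mpr (by omega)) hy
  calc _ ≤ _ := measure_mono hsub
    _ ≤ ENNReal.ofReal (Real.exp (-(2 * (σ * Real.sqrt N * c) ^ 2 / (N * σ ^ 2)))) :=
      pi_gaussianReal_bridge_tail_le μ hv (by positivity) N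
    _ = ENNReal.ofReal (Real.exp (-2 * c ^ 2)) := by rw [hexponent, neg_mul]
end

section
/- (Theorem 3.1, KKT conditions for exact segmentation.) Let N ≥ 2, y ∈ ℝ^N, λ > 0, let B be the (N−1)×N finite-difference matrix, and fix jump locations 0 = N_{•0} < N_{•1} < … < N_{•L} = N with piece sizes N_l = N_{•l} − N_{•(l−1)} and signs s₁,…,s_{L−1} ∈ {−1,+1}, with the convention s₀ = s_L = 0. Let ȳ_l be the mean of y over the l-th piece {N_{•(l−1)}+1,…,N_{•l}}. Then the TV estimate f̂_λ(y) is constant on each piece l with value ĥ_l and satisfies sign(ĥ_{l+1} − ĥ_l) = s_l for l = 1,…,L−1, if and only if the following hold: (i) ĥ_l = ȳ_l + (s_l − s_{l−1})·λ/N_l for l = 1,…,L; (ii) sign(ĥ_{l+1} − ĥ_l) = s_l for l = 1,…,L−1; and (iii) the dual variables w defined by w_{N_{•(l−1)}+i} = −Σ_{k=1}^i y_{N_{•(l−1)}+k} + i·ĥ_l + λ·s_{l−1}, for i = 1,…,N_l and l = 1,…,L (restricted to indices 1,…,N−1), all lie in the interval [−λ, λ]. -/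
open Matrix

/-- The `(N−1)×N` finite-difference matrix of dimension one:
row `i` has `+1` in column `i` and `−1` in column `i+1`. -/
def oneDiff (N : ℕ) : Matrix (Fin (N - 1)) (Fin N) ℝ :=
  fun i j => if (j : ℕ) = (i : ℕ) then 1 else if (j : ℕ) = (i : ℕ) + 1 then -1 else 0

/-- The mean `ȳ_l` of `y` over the `l`-th piece `{N_{•(l−1)}+1,…,N_{•l}}` (1-based),
i.e. over 0-based indices `j` with `Nb (l−1) ≤ j < Nb l`. -/
noncomputable def pieceMean {N : ℕ} (y : Fin N → ℝ) (Nb : ℕ → ℕ) (l : ℕ) : ℝ :=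
  (∑ j : Fin N, if Nb (l - 1) ≤ (j : ℕ) ∧ (j : ℕ) < Nb l then y j else 0) /
    ((Nb l - Nb (l - 1) : ℕ) : ℝ)

/-- The partial sum `Σ_{k=1}^i y_{N_{•(l−1)}+k}` within the `l`-th piece. -/
noncomputable def piecePartialSum {N : ℕ} (y : Fin N → ℝ) (Nb : ℕ → ℕ) (l i : ℕ) : ℝ :=
  ∑ j : Fin N, if Nb (l - 1) ≤ (j : ℕ) ∧ (j : ℕ) < Nb (l - 1) + i then y j else 0

/-
If `g - y = -Bᵀv` for a dual vector with `|v_j| ≤ λ` and `v_j (Bg)_j = λ |(Bg)_j|`, then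
`F(f) - F(g) ≥ ½‖f - g‖²`, so `g` minimizes `F(f) = ½‖y - f‖² + λ‖Bf‖₁`; conversely, at a
minimizer any such `v` with `|v_j| ≤ λ` satisfies the slackness identity, because `F` is
stationary along the ray `t ↦ (1 + t) g`, on which the penalty is linear. For the difference
matrix the equation `g - y = -Bᵀv` forces `v_j = -(r_0 + ⋯ + r_j)`, `r = g - y`, together with
`∑ r = 0`; testing minimality against the indicators of the prefixes `{0, …, m - 1}` shows that
the bound `|v_j| ≤ λ` is necessary. For `g` constant on the pieces, slackness at the jump
`N_{•l}` says that the cumulative residual there equals `λ s_l`; differencing consecutive jumps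
gives (i), and inside a piece the cumulative residual is the expression of (iii).
-/
open Filter Topology

theorem nonneg_of_forall_mul_nonneg {a c ε : ℝ} (hε : 0 < ε)
    (h : ∀ t, 0 < t → t < ε → 0 ≤ t * (a * t + c)) : 0 ≤ c := by
  have hlim : Tendsto (fun t => a * t + c) (𝓝[>] 0) (𝓝 c) := by
    have hcont : Continuous fun t : ℝ => a * t + c := by fun_prop
    simpa using (hcont.tendsto 0).mono_left nhdsWithin_le_nhds
  refine ge_of_tendsto hlim ?_
  filter_upwards [Ioo_mem_nhdsGT hε] with t ht
  exact nonneg_of_mul_nonneg_right (h t ht.1 ht.2) ht.1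

theorem abs_le_of_forall_quadratic_nonneg {a b c ε : ℝ} (hε : 0 < ε)
    (h : ∀ t, |t| < ε → 0 ≤ a * t ^ 2 + c * t + b * |t|) : |c| ≤ b := by
  have hright : 0 ≤ c + b := nonneg_of_forall_mul_nonneg (a := a) hε fun t ht htε => by
    have := h t (by rwa [abs_of_pos ht])
    rw [abs_of_pos ht] at this
    linarith [show t * (a * t + (c + b)) = a * t ^ 2 + c * t + b * t by ring]
  have hleft : 0 ≤ b - c := nonneg_of_forall_mul_nonneg (a := a) hε fun t ht htε => by
    have := h (-t) (by rwa [abs_neg, abs_of_pos ht])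
    rw [abs_neg, abs_of_pos ht] at this
    linarith [show t * (a * t + (b - c)) = a * (-t) ^ 2 + c * -t + b * t by ring]
  exact abs_le.2 ⟨by linarith, by linarith⟩

theorem mul_eq_mul_abs_iff_of_sign_eq {r lam x s : ℝ} (hs : s = 1 ∨ s = -1)
    (hx : Real.sign x = s) : r * x = lam * |x| ↔ r = lam * s := by
  rcases lt_trichotomy x 0 with hneg | rfl | hpos
  · rw [← hx, Real.sign_of_neg hneg, abs_of_neg hneg, show lam * -x = lam * -1 * x by ring]
    exact mul_left_inj' hneg.ne
  · rw [Real.sign_zero] at hx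
    rcases hs with rfl | rfl <;> norm_num at hx
  · rw [← hx, Real.sign_of_pos hpos, abs_of_pos hpos, mul_one]
    exact mul_left_inj' hpos.ne'

section General

variable {P M : ℕ} (B : Matrix (Fin P) (Fin M) ℝ) (lam : ℝ) (y : Fin M → ℝ)

theorem tvF_eq_add (f g : Fin M → ℝ) :
    tvF B lam y f = tvF B lam y g + (1 / 2) * ∑ i, (f i - g i) ^ 2 + (g - y) ⬝ᵥ (f - g)
      + lam * (∑ j, |(B *ᵥ f) j| - ∑ j, |(B *ᵥ g) j|) := by
  have hsq : ∑ i, (y i - f i) ^ 2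
      = ∑ i, (y i - g i) ^ 2 + ∑ i, (f i - g i) ^ 2 + 2 * (g - y) ⬝ᵥ (f - g) := by
    simp only [dotProduct, Pi.sub_apply, Finset.mul_sum, ← Finset.sum_add_distrib]
    exact Finset.sum_congr rfl fun i _ => by ring
  rw [tvF, tvF, hsq]
  ring

theorem sum_abs_mulVec_smul (c : ℝ) (g : Fin M → ℝ) :
    ∑ j, |(B *ᵥ (c • g)) j| = |c| * ∑ j, |(B *ᵥ g) j| := by
  simp [mulVec_smul, abs_mul, Finset.mul_sum]

variable {B lam y}

theorem mul_le_mul_abs_of_abs_le {v x : ℝ} (hv : |v| ≤ lam) : v * x ≤ lam * |x| :=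
  calc v * x ≤ |v| * |x| := by rw [← abs_mul]; exact le_abs_self _
    _ ≤ lam * |x| := by gcongr

theorem dotProduct_mulVec_le_of_abs_le {v : Fin P → ℝ} (hv : ∀ j, |v j| ≤ lam)
    (f : Fin M → ℝ) : v ⬝ᵥ (B *ᵥ f) ≤ lam * ∑ j, |(B *ᵥ f) j| := by
  rw [dotProduct, Finset.mul_sum]
  exact Finset.sum_le_sum fun j _ => mul_le_mul_abs_of_abs_le (hv j)

theorem tvF_le_of_dual {g : Fin M → ℝ} {v : Fin P → ℝ} (hv : ∀ j, |v j| ≤ lam)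
    (hslack : ∀ j, v j * (B *ᵥ g) j = lam * |(B *ᵥ g) j|) (hres : g - y = -(v ᵥ* B))
    (f : Fin M → ℝ) : tvF B lam y g ≤ tvF B lam y f := by
  have hlin : (g - y) ⬝ᵥ (f - g) = -(v ⬝ᵥ (B *ᵥ f)) + lam * ∑ j, |(B *ᵥ g) j| := by
    rw [hres, neg_dotProduct, ← dotProduct_mulVec, mulVec_sub, dotProduct_sub, dotProduct,
      dotProduct, Finset.mul_sum]
    simp only [hslack]
    ring
  have hsq : 0 ≤ ∑ i, (f i - g i) ^ 2 := Finset.sum_nonneg fun i _ => sq_nonneg _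
  rw [tvF_eq_add B lam y f g, hlin]
  linarith [dotProduct_mulVec_le_of_abs_le (B := B) hv f]

theorem abs_dotProduct_le_of_isMin (hlam : 0 ≤ lam) {g : Fin M → ℝ}
    (hmin : ∀ f, tvF B lam y g ≤ tvF B lam y f) (d : Fin M → ℝ) :
    |(g - y) ⬝ᵥ d| ≤ lam * ∑ j, |(B *ᵥ d) j| := by
  refine abs_le_of_forall_quadratic_nonneg (a := (1 / 2) * ∑ i, d i ^ 2) one_pos fun t _ => ?_
  have hmove := hmin (g + t • d)
  have htv : ∑ j, |(B *ᵥ (g + t • d)) j| ≤ ∑ j, |(B *ᵥ g) j| + |t| * ∑ j, |(B *ᵥ d) j| := by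
    rw [← sum_abs_mulVec_smul, ← Finset.sum_add_distrib]
    exact Finset.sum_le_sum fun j _ => by rw [mulVec_add]; exact abs_add_le _ _
  rw [tvF_eq_add B lam y (g + t • d) g, add_sub_cancel_left, dotProduct_smul, smul_eq_mul] at hmove
  have hsq : ∑ i, ((g + t • d) i - g i) ^ 2 = t ^ 2 * ∑ i, d i ^ 2 := by
    simp [mul_pow, Finset.mul_sum]
  rw [hsq] at hmove
  nlinarith [mul_le_mul_of_nonneg_left htv hlam]

theorem dual_mul_eq_of_isMin {g : Fin M → ℝ} {v : Fin P → ℝ}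
    (hmin : ∀ f, tvF B lam y g ≤ tvF B lam y f) (hv : ∀ j, |v j| ≤ lam)
    (hres : g - y = -(v ᵥ* B)) (j : Fin P) :
    v j * (B *ᵥ g) j = lam * |(B *ᵥ g) j| := by
  have hstat : (g - y) ⬝ᵥ g + lam * ∑ j, |(B *ᵥ g) j| = 0 := by
    refine abs_nonpos_iff.1 <| abs_le_of_forall_quadratic_nonneg
      (a := (1 / 2) * ∑ i, g i ^ 2) one_pos fun t ht => ?_
    have hmove := hmin ((1 + t) • g)
    have hstep : (1 + t) • g - g = t • g := by rw [add_smul, one_smul, add_sub_cancel_left]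
    rw [tvF_eq_add B lam y ((1 + t) • g) g, hstep, dotProduct_smul, smul_eq_mul,
      sum_abs_mulVec_smul, abs_of_pos (by linarith [(abs_lt.1 ht).1])] at hmove
    have hsq : ∑ i, (((1 + t) • g) i - g i) ^ 2 = t ^ 2 * ∑ i, g i ^ 2 := by
      simp only [Pi.smul_apply, smul_eq_mul, Finset.mul_sum]
      exact Finset.sum_congr rfl fun i _ => by ring
    rw [hsq] at hmove
    linarith
  have hsum : ∑ j, v j * (B *ᵥ g) j = ∑ j, lam * |(B *ᵥ g) j| := by
    rw [hres, neg_dotProduct, ← dotProduct_mulVec] at hstat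
    rw [← Finset.mul_sum, ← dotProduct]
    linarith
  exact (Finset.sum_eq_sum_iff_of_le fun j _ => mul_le_mul_abs_of_abs_le (hv j)).1 hsum j
    (Finset.mem_univ j)

end General

theorem sum_fin_ite_val_eq {P : ℕ} (m : ℕ) (c : ℝ) :
    ∑ j : Fin P, (if (j : ℕ) = m then c else 0) = if m < P then c else 0 := by
  rw [Fin.sum_univ_eq_sum_range (fun n => if n = m then c else 0)]
  simp

section Windows

variable {N : ℕ}

def windowSum (r : Fin N → ℝ) (a b : ℕ) : ℝ :=
  ∑ j ∈ Finset.univ.filter fun j : Fin N => a ≤ (j : ℕ) ∧ (j : ℕ) < b, r j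

theorem windowSum_self (r : Fin N → ℝ) (a : ℕ) : windowSum r a a = 0 :=
  Finset.sum_eq_zero fun j hj => by
    simp only [Finset.mem_filter, Finset.mem_univ, true_and] at hj
    omega

theorem windowSum_add_windowSum (r : Fin N → ℝ) {a b c : ℕ} (hab : a ≤ b) (hbc : b ≤ c) :
    windowSum r a b + windowSum r b c = windowSum r a c := by
  rw [windowSum, windowSum, windowSum, ← Finset.sum_union]
  · congr 1
    ext j
    simp only [Finset.mem_union, Finset.mem_filter, Finset.mem_univ, true_and]
    omega
  · exact Finset.disjoint_filter.2 fun j _ h1 h2 => by omega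

theorem windowSum_sub (r r' : Fin N → ℝ) (a b : ℕ) :
    windowSum (r - r') a b = windowSum r a b - windowSum r' a b :=
  Finset.sum_sub_distrib _ _

theorem windowSum_succ (r : Fin N → ℝ) {k : ℕ} (hk : k < N) :
    windowSum r k (k + 1) = r ⟨k, hk⟩ := by
  rw [windowSum, Finset.sum_eq_single_of_mem ⟨k, hk⟩ (by simp)]
  intro j hj hne
  simp only [Finset.mem_filter, Finset.mem_univ, true_and] at hj
  exact absurd (Fin.ext (by dsimp only; omega)) hne

theorem windowSum_eq_mul_of_forall_eq (r : Fin N → ℝ) {a b : ℕ} {c : ℝ} (hbN : b ≤ N)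
    (hr : ∀ j : Fin N, a ≤ (j : ℕ) → (j : ℕ) < b → r j = c) :
    windowSum r a b = ((b - a : ℕ) : ℝ) * c := by
  rw [windowSum, Finset.sum_congr rfl fun j hj => hr j (Finset.mem_filter.1 hj).2.1
    (Finset.mem_filter.1 hj).2.2, Finset.sum_const, nsmul_eq_mul]
  have hIco : (Finset.univ.filter fun j : Fin N => a ≤ (j : ℕ) ∧ (j : ℕ) < b).map
      Fin.valEmbedding = Finset.Ico a b := by
    ext n
    simp only [Finset.mem_map, Finset.mem_filter, Finset.mem_univ, true_and,
      Fin.valEmbedding_apply, Finset.mem_Ico]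
    exact ⟨fun ⟨j, hj, hjn⟩ => hjn ▸ hj, fun hn => ⟨⟨n, by omega⟩, hn, rfl⟩⟩
  rw [← Finset.card_map, hIco, Nat.card_Ico]

theorem dotProduct_prefixIndicator (r : Fin N → ℝ) (m : ℕ) :
    r ⬝ᵥ (fun k => if (k : ℕ) < m then 1 else 0) = windowSum r 0 m := by
  simp [dotProduct, windowSum, Finset.sum_filter]

theorem oneDiff_mulVec_apply (f : Fin N → ℝ) (j : Fin (N - 1)) :
    (oneDiff N *ᵥ f) j = f ⟨j, by omega⟩ - f ⟨j + 1, by omega⟩ := by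
  rw [mulVec, dotProduct, Finset.sum_eq_add ⟨j, by omega⟩ ⟨j + 1, by omega⟩]
  · simp [oneDiff, sub_eq_add_neg]
  · simp [Fin.ext_iff]
  · intro k _ hk
    simp only [ne_eq, Fin.ext_iff] at hk
    simp [oneDiff, hk.1, hk.2]
  all_goals simp

theorem piecePartialSum_eq_windowSum (y : Fin N → ℝ) (Nb : ℕ → ℕ) (l i : ℕ) :
    piecePartialSum y Nb l i = windowSum y (Nb (l - 1)) (Nb (l - 1) + i) :=
  (Finset.sum_filter _ _).symm

theorem pieceMean_eq_windowSum_div (y : Fin N → ℝ) (Nb : ℕ → ℕ) (l : ℕ) :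
    pieceMean y Nb l = windowSum y (Nb (l - 1)) (Nb l) / ((Nb l - Nb (l - 1) : ℕ) : ℝ) := by
  rw [pieceMean, windowSum, Finset.sum_filter]

theorem vecMul_oneDiff_prefixSum (r : Fin N → ℝ) (hr : windowSum r 0 N = 0) :
    (fun j : Fin (N - 1) => windowSum r 0 (j + 1)) ᵥ* oneDiff N = r := by
  ext k
  set R := windowSum r 0
  have hcol : ∀ j : Fin (N - 1), R (j + 1) * oneDiff N j k
      = (if (j : ℕ) = k then R (k + 1) else 0)
        - (if (j : ℕ) = k - 1 then (if 1 ≤ (k : ℕ) then R k else 0) else 0) := by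
    rintro ⟨j, hj⟩
    obtain ⟨k, hk⟩ := k
    simp only [oneDiff]
    split_ifs <;> subst_vars <;> first | omega | ring1 | (rw [Nat.sub_add_cancel ‹1 ≤ k›]; ring)
  have hfirst : (if (k : ℕ) < N - 1 then R (k + 1) else 0) = R (k + 1) := by
    split_ifs
    · rfl
    · rw [show (k : ℕ) + 1 = N by omega, hr]
  have hsecond : (if (k : ℕ) - 1 < N - 1 then (if 1 ≤ (k : ℕ) then R k else 0) else 0)
      = R k := by
    split_ifs <;> first | rfl | (rw [show (k : ℕ) = 0 by omega]; exact (windowSum_self r 0).symm)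
  have hstep : R (k + 1) = R k + r k := by
    rw [← windowSum_succ r k.isLt]
    exact (windowSum_add_windowSum r (Nat.zero_le _) (Nat.le_succ _)).symm
  rw [vecMul, dotProduct, Finset.sum_congr rfl fun j _ => hcol j, Finset.sum_sub_distrib,
    sum_fin_ite_val_eq, sum_fin_ite_val_eq, hfirst, hsecond, hstep]
  ring

theorem oneDiff_mulVec_prefixIndicator (m : ℕ) (j : Fin (N - 1)) :
    (oneDiff N *ᵥ fun k => if (k : ℕ) < m then 1 else 0) j = if (j : ℕ) + 1 = m then 1 else 0 := by
  rw [oneDiff_mulVec_apply]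
  dsimp only
  split_ifs <;> first | omega | norm_num

theorem isMin_tvF_oneDiff_iff {lam : ℝ} (hlam : 0 ≤ lam) (y g : Fin N → ℝ) :
    (∀ f, tvF (oneDiff N) lam y g ≤ tvF (oneDiff N) lam y f) ↔
      windowSum (g - y) 0 N = 0 ∧ ∀ j : Fin (N - 1), |windowSum (g - y) 0 (j + 1)| ≤ lam ∧
        -windowSum (g - y) 0 (j + 1) * (oneDiff N *ᵥ g) j = lam * |(oneDiff N *ᵥ g) j| := by
  set v : Fin (N - 1) → ℝ := -fun j : Fin (N - 1) => windowSum (g - y) 0 (j + 1) with hv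
  have hres (hN : windowSum (g - y) 0 N = 0) : g - y = -(v ᵥ* oneDiff N) := by
    rw [hv, neg_vecMul, neg_neg, vecMul_oneDiff_prefixSum _ hN]
  constructor
  · intro hmin
    have hprefix (m : ℕ) :=
      abs_dotProduct_le_of_isMin hlam hmin fun k => if (k : ℕ) < m then 1 else 0
    simp only [dotProduct_prefixIndicator, oneDiff_mulVec_prefixIndicator] at hprefix
    have hN : windowSum (g - y) 0 N = 0 := by
      refine abs_nonpos_iff.1 ((hprefix N).trans_eq ?_)
      rw [Finset.sum_eq_zero fun j _ => by rw [if_neg (by omega), abs_zero], mul_zero]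
    have hbound (j : Fin (N - 1)) : |windowSum (g - y) 0 (j + 1)| ≤ lam := by
      refine (hprefix (j + 1)).trans_eq ?_
      rw [Finset.sum_eq_single j (fun j' _ hj' => by
        rw [if_neg (fun h => hj' (Fin.ext (by omega))), abs_zero]) (by simp), if_pos rfl,
        abs_one, mul_one]
    have hv' (j : Fin (N - 1)) : |v j| ≤ lam := by rw [hv, Pi.neg_apply, abs_neg]; exact hbound j
    exact ⟨hN, fun j => ⟨hbound j, dual_mul_eq_of_isMin hmin hv' (hres hN) j⟩⟩
  · rintro ⟨hN, h⟩
    exact tvF_le_of_dual (v := v) (fun j => by rw [hv, Pi.neg_apply, abs_neg]; exact (h j).1)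
      (fun j => (h j).2) (hres hN)

end Windows

def ConstOnPieces {N : ℕ} (Nb : ℕ → ℕ) (L : ℕ) (g : Fin N → ℝ) (hhat : ℕ → ℝ) : Prop :=
  ∀ l, 1 ≤ l → l ≤ L → ∀ j : Fin N, Nb (l - 1) ≤ (j : ℕ) → (j : ℕ) < Nb l → g j = hhat l

section Pieces

variable {N L : ℕ} {Nb : ℕ → ℕ} {y g : Fin N → ℝ} {hhat s : ℕ → ℝ} {lam : ℝ}

theorem exists_piece (hNb0 : Nb 0 = 0) {m : ℕ} (hm : m < Nb L) :
    ∃ l, 1 ≤ l ∧ l ≤ L ∧ Nb (l - 1) ≤ m ∧ m < Nb l := by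
  have hex : ∃ l, m < Nb l := ⟨L, hm⟩
  have hpos : 1 ≤ Nat.find hex := Nat.one_le_iff_ne_zero.2 fun h => by
    have := Nat.find_spec hex
    rw [h, hNb0] at this
    omega
  exact ⟨Nat.find hex, hpos, Nat.find_min' hex hm,
    not_lt.1 (Nat.find_min hex (by omega)), Nat.find_spec hex⟩

theorem piece_unique (hNb : StrictMonoOn Nb (Set.Iic L)) {m l l' : ℕ}
    (hl : l ≤ L) (hl' : l' ≤ L) (h1 : Nb (l - 1) ≤ m) (h2 : m < Nb l)
    (h1' : Nb (l' - 1) ≤ m) (h2' : m < Nb l') : l = l' := by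
  by_contra hne
  rcases Nat.lt_or_gt_of_ne hne with h | h
  · have := hNb.monotoneOn (show l ≤ L from hl) (show l' - 1 ≤ L by omega)
      (show l ≤ l' - 1 by omega)
    omega
  · have := hNb.monotoneOn (show l' ≤ L from hl') (show l - 1 ≤ L by omega)
      (show l' ≤ l - 1 by omega)
    omega

theorem exists_constOnPieces (hNb0 : Nb 0 = 0) (hNbL : Nb L = N)
    (hNb : StrictMonoOn Nb (Set.Iic L)) (hhat : ℕ → ℝ) :
    ∃ g : Fin N → ℝ, ConstOnPieces Nb L g hhat := by
  choose p hp using fun j : Fin N => exists_piece (L := L) hNb0 (by rw [hNbL]; exact j.isLt)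
  refine ⟨fun j => hhat (p j), fun l hl hlL j hj1 hj2 => ?_⟩
  obtain ⟨-, hpL, hp1, hp2⟩ := hp j
  exact congrArg hhat (piece_unique hNb hpL hlL hp1 hp2 hj1 hj2)

theorem windowSum_residual_of_constOnPieces (hNbL : Nb L = N) (hNb : StrictMonoOn Nb (Set.Iic L))
    (hg : ConstOnPieces Nb L g hhat) {l i : ℕ} (hl : 1 ≤ l) (hlL : l ≤ L)
    (hi : i ≤ Nb l - Nb (l - 1)) :
    windowSum (g - y) 0 (Nb (l - 1) + i)
      = windowSum (g - y) 0 (Nb (l - 1)) + i * hhat l - piecePartialSum y Nb l i := by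
  have hmono : Nb (l - 1) ≤ Nb l := hNb.monotoneOn (by omega : l - 1 ≤ L) hlL (by omega)
  have hNbl : Nb l ≤ N := hNbL ▸ hNb.monotoneOn hlL (le_refl L) hlL
  rw [← windowSum_add_windowSum _ (Nat.zero_le _) (Nat.le_add_right _ i),
    windowSum_sub g y (Nb (l - 1)),
    windowSum_eq_mul_of_forall_eq g (by omega) fun j hj1 hj2 => hg l hl hlL j hj1 (by omega),
    piecePartialSum_eq_windowSum, Nat.add_sub_cancel_left]
  ring

theorem eq_pieceMean_add_iff (hNbL : Nb L = N) (hNb : StrictMonoOn Nb (Set.Iic L))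
    (hg : ConstOnPieces Nb L g hhat) {l : ℕ} (hl : 1 ≤ l) (hlL : l ≤ L) (c : ℝ) :
    hhat l = pieceMean y Nb l + c / ((Nb l - Nb (l - 1) : ℕ) : ℝ) ↔
      windowSum (g - y) 0 (Nb l) - windowSum (g - y) 0 (Nb (l - 1)) = c := by
  have hlt : Nb (l - 1) < Nb l := hNb (by omega : l - 1 ≤ L) hlL (by omega)
  have hn : (0 : ℝ) < ((Nb l - Nb (l - 1) : ℕ) : ℝ) := by exact_mod_cast Nat.sub_pos_of_lt hlt
  have hpiece := windowSum_residual_of_constOnPieces (y := y) hNbL hNb hg hl hlL le_rfl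
  rw [Nat.add_sub_cancel' hlt.le] at hpiece
  rw [hpiece, pieceMean_eq_windowSum_div, ← add_div, eq_div_iff hn.ne',
    piecePartialSum_eq_windowSum, Nat.add_sub_cancel' hlt.le]
  constructor <;> intro h <;> linarith

theorem forall_eq_pieceMean_iff (hNb0 : Nb 0 = 0) (hNbL : Nb L = N)
    (hNb : StrictMonoOn Nb (Set.Iic L)) (hg : ConstOnPieces Nb L g hhat) (hs0 : s 0 = 0) :
    (∀ l, 1 ≤ l → l ≤ L →
        hhat l = pieceMean y Nb l + (s l - s (l - 1)) * lam / ((Nb l - Nb (l - 1) : ℕ) : ℝ)) ↔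
      ∀ l ≤ L, windowSum (g - y) 0 (Nb l) = lam * s l := by
  constructor
  · intro h l hlL
    induction l with
    | zero => rw [hNb0, windowSum_self, hs0, mul_zero]
    | succ l ih =>
      have hstep := (eq_pieceMean_add_iff hNbL hNb hg (by omega) hlL _).1 (h (l + 1) (by omega) hlL)
      rw [Nat.add_sub_cancel, ih (by omega)] at hstep
      linarith
  · intro h l hl hlL
    rw [eq_pieceMean_add_iff hNbL hNb hg hl hlL, h l hlL, h (l - 1) (by omega)]
    ring

theorem forall_abs_dual_le_iff (hNb0 : Nb 0 = 0) (hNbL : Nb L = N)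
    (hNb : StrictMonoOn Nb (Set.Iic L)) (hg : ConstOnPieces Nb L g hhat)
    (hbd : ∀ l ≤ L, windowSum (g - y) 0 (Nb l) = lam * s l) :
    (∀ l i : ℕ, 1 ≤ l → l ≤ L → 1 ≤ i → i ≤ Nb l - Nb (l - 1) → Nb (l - 1) + i ≤ N - 1 →
        |(-piecePartialSum y Nb l i + (i : ℝ) * hhat l + lam * s (l - 1))| ≤ lam) ↔
      ∀ j : Fin (N - 1), |windowSum (g - y) 0 (j + 1)| ≤ lam := by
  have hdual {l i : ℕ} (hl : 1 ≤ l) (hlL : l ≤ L) (hi : i ≤ Nb l - Nb (l - 1)) :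
      -piecePartialSum y Nb l i + (i : ℝ) * hhat l + lam * s (l - 1)
        = windowSum (g - y) 0 (Nb (l - 1) + i) := by
    rw [windowSum_residual_of_constOnPieces hNbL hNb hg hl hlL hi, hbd (l - 1) (by omega)]
    ring
  constructor
  · intro h j
    obtain ⟨l, hl, hlL, h1, h2⟩ := exists_piece hNb0 (show (j : ℕ) < Nb L by omega)
    have := h l (j + 1 - Nb (l - 1)) hl hlL (by omega) (by omega) (by omega)
    rwa [hdual hl hlL (by omega), Nat.add_sub_cancel' (by omega)] at this
  · intro h l i hl hlL hi1 hi hiN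
    have := h ⟨Nb (l - 1) + i - 1, by omega⟩
    rwa [Fin.val_mk, Nat.sub_add_cancel (by omega), ← hdual hl hlL hi] at this

theorem oneDiff_mulVec_of_constOnPieces (hNbL : Nb L = N) (hNb : StrictMonoOn Nb (Set.Iic L))
    (hg : ConstOnPieces Nb L g hhat) {l : ℕ} (hl : 1 ≤ l) (hlL : l ≤ L) (j : Fin (N - 1))
    (h1 : Nb (l - 1) ≤ j) (h2 : (j : ℕ) + 1 ≤ Nb l) :
    (oneDiff N *ᵥ g) j = if (j : ℕ) + 1 = Nb l then hhat l - hhat (l + 1) else 0 := by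
  rw [oneDiff_mulVec_apply, hg l hl hlL ⟨j, by omega⟩ h1 (by dsimp only; omega)]
  split_ifs with hj
  · have hlL' : l < L := lt_of_le_of_ne hlL fun h => by subst h; omega
    have hnext : Nb l < Nb (l + 1) :=
      hNb (show l ≤ L from hlL) (show l + 1 ≤ L from hlL') (Nat.lt_succ_self l)
    rw [hg (l + 1) (by omega) hlL' ⟨j + 1, by omega⟩ (by dsimp only; rw [Nat.add_sub_cancel]; omega)
      (by dsimp only; omega)]
  · rw [hg l hl hlL ⟨j + 1, by omega⟩ (by dsimp only; omega) (by dsimp only; omega), sub_self]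

theorem forall_dual_mul_eq_iff (hNb0 : Nb 0 = 0) (hNbL : Nb L = N)
    (hNb : StrictMonoOn Nb (Set.Iic L)) (hg : ConstOnPieces Nb L g hhat)
    (hs : ∀ l, 1 ≤ l → l ≤ L - 1 → s l = 1 ∨ s l = -1)
    (hsign : ∀ l, 1 ≤ l → l ≤ L - 1 → Real.sign (hhat (l + 1) - hhat l) = s l) :
    (∀ j : Fin (N - 1),
        -windowSum (g - y) 0 (j + 1) * (oneDiff N *ᵥ g) j = lam * |(oneDiff N *ᵥ g) j|) ↔
      ∀ l, 1 ≤ l → l ≤ L - 1 → windowSum (g - y) 0 (Nb l) = lam * s l := by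
  have hbreak {l : ℕ} (hl : 1 ≤ l) (hlL : l ≤ L - 1) (j : Fin (N - 1)) (hj : (j : ℕ) + 1 = Nb l) :
      -windowSum (g - y) 0 (j + 1) * (oneDiff N *ᵥ g) j = lam * |(oneDiff N *ᵥ g) j| ↔
        windowSum (g - y) 0 (Nb l) = lam * s l := by
    have hprev : Nb (l - 1) < Nb l := hNb (by omega : l - 1 ≤ L) (by omega : l ≤ L) (by omega)
    rw [oneDiff_mulVec_of_constOnPieces hNbL hNb hg hl (by omega) j (by omega) hj.le, if_pos hj,
      hj, abs_sub_comm, neg_mul_comm, neg_sub]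
    exact mul_eq_mul_abs_iff_of_sign_eq (hs l hl hlL) (hsign l hl hlL)
  constructor
  · intro h l hl hlL
    have hpos : Nb 0 < Nb l := hNb (Nat.zero_le L) (by omega : l ≤ L) (by omega)
    have hlt : Nb l < Nb L := hNb (by omega : l ≤ L) (le_refl L) (by omega)
    exact (hbreak hl hlL ⟨Nb l - 1, by omega⟩ (by dsimp only; omega)).1 (h _)
  · intro h j
    obtain ⟨l, hl, hlL, h1, h2⟩ := exists_piece hNb0 (show (j : ℕ) < Nb L by omega)
    by_cases hj : (j : ℕ) + 1 = Nb l
    · have hlL' : l ≤ L - 1 := by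
        by_contra hcon
        rw [show l = L by omega] at hj
        omega
      exact (hbreak hl hlL' j hj).2 (h l hl hlL')
    · rw [oneDiff_mulVec_of_constOnPieces hNbL hNb hg hl hlL j h1 (by omega), if_neg hj]
      simp

end Pieces

theorem tv_exact_segmentation_kkt_general
    (N L : ℕ)
    (y : Fin N → ℝ) (lam : ℝ) (hlam : 0 < lam)
    (Nb : ℕ → ℕ) (hNb0 : Nb 0 = 0) (hNbL : Nb L = N)
    (hNbmono : ∀ l, l < L → Nb l < Nb (l + 1))
    (s : ℕ → ℝ) (hs0 : s 0 = 0) (hsL : s L = 0)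
    (hs : ∀ l, 1 ≤ l → l ≤ L - 1 → s l = 1 ∨ s l = -1)
    (hhat : ℕ → ℝ) :
    (∃ fhat : Fin N → ℝ,
      (∀ f : Fin N → ℝ, tvF (oneDiff N) lam y fhat ≤ tvF (oneDiff N) lam y f) ∧
      (∀ l, 1 ≤ l → l ≤ L →
        ∀ j : Fin N, Nb (l - 1) ≤ (j : ℕ) → (j : ℕ) < Nb l → fhat j = hhat l) ∧
      (∀ l, 1 ≤ l → l ≤ L - 1 → Real.sign (hhat (l + 1) - hhat l) = s l)) ↔
    ((∀ l, 1 ≤ l → l ≤ L →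
        hhat l = pieceMean y Nb l +
          (s l - s (l - 1)) * lam / ((Nb l - Nb (l - 1) : ℕ) : ℝ)) ∧
     (∀ l, 1 ≤ l → l ≤ L - 1 → Real.sign (hhat (l + 1) - hhat l) = s l) ∧
     (∀ l i : ℕ, 1 ≤ l → l ≤ L → 1 ≤ i → i ≤ Nb l - Nb (l - 1) →
        Nb (l - 1) + i ≤ N - 1 →
        |(-piecePartialSum y Nb l i + (i : ℝ) * hhat l + lam * s (l - 1))| ≤ lam)) := by
  have hNb : StrictMonoOn Nb (Set.Iic L) := strictMonoOn_Iic_of_lt_succ hNbmono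
  constructor
  · rintro ⟨g, hmin, hg, hsign⟩
    obtain ⟨hRN, hedge⟩ := (isMin_tvF_oneDiff_iff hlam.le y g).1 hmin
    have hbreak := (forall_dual_mul_eq_iff hNb0 hNbL hNb hg hs hsign).1 fun j => (hedge j).2
    have hbd (l : ℕ) (hlL : l ≤ L) : windowSum (g - y) 0 (Nb l) = lam * s l := by
      rcases Nat.eq_zero_or_pos l with rfl | hl
      · rw [hNb0, windowSum_self, hs0, mul_zero]
      rcases hlL.eq_or_lt with rfl | hlL'
      · rw [hNbL, hRN, hsL, mul_zero]
      exact hbreak l hl (by omega)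
    exact ⟨(forall_eq_pieceMean_iff hNb0 hNbL hNb hg hs0).2 hbd, hsign,
      (forall_abs_dual_le_iff hNb0 hNbL hNb hg hbd).2 fun j => (hedge j).1⟩
  · rintro ⟨hmean, hsign, hdual⟩
    obtain ⟨g, hg⟩ := exists_constOnPieces hNb0 hNbL hNb hhat
    have hbd := (forall_eq_pieceMean_iff hNb0 hNbL hNb hg hs0).1 hmean
    have hRN : windowSum (g - y) 0 N = 0 := by simpa [hNbL, hsL] using hbd L le_rfl
    have hbound := (forall_abs_dual_le_iff hNb0 hNbL hNb hg hbd).1 hdual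
    have hslack := (forall_dual_mul_eq_iff hNb0 hNbL hNb hg hs hsign (lam := lam)).2
      fun l hl hlL => hbd l (by omega)
    exact ⟨g, (isMin_tvF_oneDiff_iff hlam.le y g).2 ⟨hRN, fun j => ⟨hbound j, hslack j⟩⟩,
      hg, hsign⟩

/-- Theorem 3.1, KKT conditions for exact segmentation of 1D TV:
the TV estimate is constant on each piece `l` with value `ĥ_l` and
`sign(ĥ_{l+1} − ĥ_l) = s_l`, if and only if (i) `ĥ_l = ȳ_l + (s_l − s_{l−1})λ/N_l`;
(ii) `sign(ĥ_{l+1} − ĥ_l) = s_l`; (iii) the dual variables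
`w_{N_{•(l−1)}+i} = −Σ_{k=1}^i y_{N_{•(l−1)}+k} + i·ĥ_l + λ s_{l−1}` (restricted to
indices `1,…,N−1`) all lie in `[−λ, λ]`. -/
theorem tv_exact_segmentation_kkt
    (N L : ℕ) (hN : 2 ≤ N) (hL : 1 ≤ L)
    (y : Fin N → ℝ) (lam : ℝ) (hlam : 0 < lam)
    (Nb : ℕ → ℕ) (hNb0 : Nb 0 = 0) (hNbL : Nb L = N)
    (hNbmono : ∀ l, l < L → Nb l < Nb (l + 1))
    (s : ℕ → ℝ) (hs0 : s 0 = 0) (hsL : s L = 0)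
    (hs : ∀ l, 1 ≤ l → l ≤ L - 1 → s l = 1 ∨ s l = -1)
    (hhat : ℕ → ℝ) :
    (∃ fhat : Fin N → ℝ,
      (∀ f : Fin N → ℝ, tvF (oneDiff N) lam y fhat ≤ tvF (oneDiff N) lam y f) ∧
      (∀ l, 1 ≤ l → l ≤ L →
        ∀ j : Fin N, Nb (l - 1) ≤ (j : ℕ) → (j : ℕ) < Nb l → fhat j = hhat l) ∧
      (∀ l, 1 ≤ l → l ≤ L - 1 → Real.sign (hhat (l + 1) - hhat l) = s l)) ↔
    ((∀ l, 1 ≤ l → l ≤ L →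
        hhat l = pieceMean y Nb l +
          (s l - s (l - 1)) * lam / ((Nb l - Nb (l - 1) : ℕ) : ℝ)) ∧
     (∀ l, 1 ≤ l → l ≤ L - 1 → Real.sign (hhat (l + 1) - hhat l) = s l) ∧
     (∀ l i : ℕ, 1 ≤ l → l ≤ L → 1 ≤ i → i ≤ Nb l - Nb (l - 1) →
        Nb (l - 1) + i ≤ N - 1 →
        |(-piecePartialSum y Nb l i + (i : ℝ) * hhat l + lam * s (l - 1))| ≤ lam)) :=
  tv_exact_segmentation_kkt_general N L y lam hlam Nb hNb0 hNbL hNbmono s hs0 hsL hs hhat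
end

section
/- Let σ > 0 and for each n ≥ 2 let ε₁,…,ε_n be i.i.d. N(0,σ²) random variables with sample mean ε̄, and set W_i = Σ_{k=1}^i (ε_k − ε̄). Then the probability that the centered partial sums stay one-signed tends to zero: ℙ( W_i ≥ 0 for all i = 1,…,n−1 ) → 0 as n → ∞ (and likewise for the event { W_i ≤ 0 for all i }). -/
open MeasureTheory ProbabilityTheory Finset

open scoped ENNReal

/-!
Cycle-lemma argument. Rotating `ω` cyclically by `j` does not change the law of the i.i.d.
vector, and turns its bridge `W` into `i ↦ W (j + i) - W j` (indices mod `n`; `W` is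
`n`-periodic since `W n = 0`). So the rotated bridge stays nonnegative exactly when `W` attains
its minimum at `j`. Ties `W j = W j'` lie on hyperplanes, which are null for a product of atomless
laws; hence the `n` events "the minimum is attained at `j`" are equiprobable and a.e. disjoint,
and `ℙ(W ≥ 0) ≤ 1 / n`. The event `W ≤ 0` has the same probability by the symmetry `ω ↦ -ω`.
-/

theorem MeasureTheory.Measure.pi_ker_eq_zero {m : ℕ} (μ : Fin (m + 1) → Measure ℝ)
    [∀ i, SigmaFinite (μ i)] {i₀ : Fin (m + 1)} [NullSingletonClass (μ i₀)]
    (L : (Fin (m + 1) → ℝ) →ₗ[ℝ] ℝ) (hL : L (Pi.single i₀ 1) ≠ 0) :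
    Measure.pi μ (LinearMap.ker L) = 0 := by
  set e := MeasurableEquiv.piFinSuccAbove (fun _ => ℝ) i₀
  have hsplit (x : ℝ) (y : Fin m → ℝ) :
      L (i₀.insertNth x y) = x * L (Pi.single i₀ 1) + L (i₀.insertNth 0 y) := by
    have : Pi.single i₀ x = x • Pi.single i₀ (1 : ℝ) := by
      rw [← Pi.single_smul, smul_eq_mul, mul_one]
    conv_lhs => rw [← add_zero x, ← zero_add y]
    rw [Fin.insertNth_add, Fin.insertNth_zero_right, map_add, this, map_smul, smul_eq_mul]
  -- Fubini along the coordinate `i₀`: each line in that direction meets the kernel at most once.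
  have hslice : ∀ y, {x | L (i₀.insertNth x y) = 0}.Subsingleton := by
    intro y x hx x' hx'
    rw [Set.mem_ofPred_eq, hsplit] at hx hx'
    exact mul_right_cancel₀ hL (by linarith)
  have hmeas : MeasurableSet {p : ℝ × (Fin m → ℝ) | L (i₀.insertNth p.1 p.2) = 0} :=
    measurableSet_eq_fun (L.continuous_of_finiteDimensional.measurable.comp e.symm.measurable)
      measurable_const
  rw [← (measurePreserving_piFinSuccAbove μ i₀).symm.measure_preimage_equiv]
  change (μ i₀).prod _ {p | L (i₀.insertNth p.1 p.2) = 0} = 0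
  rw [Measure.prod_apply_symm hmeas]
  simp [fun y => (hslice y).measure_zero (μ i₀)]

theorem MeasureTheory.measurePreserving_pi_comp_addRight {α : Type*} [MeasurableSpace α] {n : ℕ}
    [NeZero n] (μ : Measure α) [SigmaFinite μ] (j : Fin n) :
    MeasurePreserving (fun (ω : Fin n → α) k => ω (k + j))
      (Measure.pi fun _ => μ) (Measure.pi fun _ => μ) :=
  measurePreserving_arrowCongr' (fun _ => μ) (fun _ => μ) (Equiv.addRight j).symm
    (MeasurableEquiv.refl α) fun _ => MeasurePreserving.id μ

namespace DiscreteBridge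

open Fin.NatCast

variable {n : ℕ} [NeZero n]

/-- `bridge i ω` is `W_i`. The index `k : ℕ` is read modulo `n`, so for `i ≥ n` this is the
`n`-periodic extension of the bridge. -/
noncomputable def bridge (i : ℕ) : (Fin n → ℝ) →ₗ[ℝ] ℝ where
  toFun ω := ∑ k ∈ range i, (ω (k : Fin n) - (∑ m, ω m) / n)
  map_add' ω ω' := by
    rw [← sum_add_distrib]
    refine sum_congr rfl fun _ _ => ?_
    simp only [Pi.add_apply, sum_add_distrib]
    ring
  map_smul' c ω := by
    simp only [Pi.smul_apply, smul_eq_mul, ← mul_sum, mul_div_assoc, ← mul_sub,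
      RingHom.id_apply]

theorem bridge_apply (i : ℕ) (ω : Fin n → ℝ) :
    bridge i ω = ∑ k ∈ range i, (ω (k : Fin n) - (∑ m, ω m) / n) := rfl

theorem sum_range_natCast (f : Fin n → ℝ) : ∑ k ∈ range n, f (k : Fin n) = ∑ k, f k := by
  rw [← Fin.sum_univ_eq_sum_range]
  simp

@[simp]
theorem bridge_zero : bridge (n := n) 0 = 0 := by
  ext
  simp [bridge_apply]

theorem bridge_self (ω : Fin n → ℝ) : bridge n ω = 0 := by
  rw [bridge_apply, sum_sub_distrib, sum_range_natCast, sum_const, card_range, nsmul_eq_mul,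
    mul_div_cancel₀ _ (NeZero.ne (n : ℝ)), sub_self]

theorem bridge_add (ω : Fin n → ℝ) (j i : ℕ) :
    bridge (j + i) ω = bridge j ω + bridge i (fun k => ω (k + (j : Fin n))) := by
  have hsum : ∑ m, ω (m + (j : Fin n)) = ∑ m, ω m :=
    Equiv.sum_comp (Equiv.addRight (j : Fin n)) ω
  simp only [bridge_apply, sum_range_add, hsum, Nat.cast_add, add_comm (j : Fin n)]

theorem bridge_periodic (ω : Fin n → ℝ) : Function.Periodic (fun i => bridge i ω) n := by
  intro i
  simp only [bridge_add, bridge_self, add_zero]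

theorem sum_ite_lt_eq_bridge (ω : Fin n → ℝ) {i : ℕ} (hi : i ≤ n) :
    (∑ k : Fin n, if (k : ℕ) < i then ω k - (∑ m, ω m) / (n : ℝ) else 0) = bridge i ω := by
  have := Fin.sum_univ_eq_sum_range
    (fun k => if k < i then ω (k : Fin n) - (∑ m, ω m) / (n : ℝ) else 0) n
  simp only [Fin.cast_val_eq_self] at this
  rw [this, ← sum_filter, bridge_apply]
  congr 1
  ext k
  simp only [mem_filter, mem_range]
  omega

theorem forall_sum_ite_lt_iff_forall_bridge {p : ℝ → Prop} (hp : p 0) (ω : Fin n → ℝ) :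
    (∀ i : ℕ, 1 ≤ i → i ≤ n - 1 →
        p (∑ k : Fin n, if (k : ℕ) < i then ω k - (∑ m, ω m) / (n : ℝ) else 0)) ↔
      ∀ i : ℕ, p (bridge i ω) := by
  have hn := Nat.pos_of_neZero n
  refine ⟨fun h i => ?_, fun h i _ hi => by
    rw [sum_ite_lt_eq_bridge ω (by omega)]
    exact h i⟩
  rw [← (bridge_periodic ω).map_mod_nat]
  rcases Nat.eq_zero_or_pos (i % n) with h0 | hpos
  · simpa [h0] using hp
  · have hlt := Nat.mod_lt i hn
    exact sum_ite_lt_eq_bridge ω hlt.le ▸ h _ hpos (by omega)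

def minAt (j : ℕ) : Set (Fin n → ℝ) := {ω | ∀ i, bridge j ω ≤ bridge i ω}

theorem measurableSet_minAt (j : ℕ) : MeasurableSet (minAt (n := n) j) := by
  simp only [minAt, Set.ofPred_forall]
  exact .iInter fun i => measurableSet_le (bridge j).continuous_of_finiteDimensional.measurable
    (bridge i).continuous_of_finiteDimensional.measurable

theorem minAt_zero : minAt (n := n) 0 = {ω | ∀ i, 0 ≤ bridge i ω} := by
  simp [minAt]

theorem preimage_addRight_minAt_zero (j : Fin n) :
    (fun (ω : Fin n → ℝ) k => ω (k + j)) ⁻¹' minAt 0 = minAt j := by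
  ext ω
  have hadd := bridge_add ω j
  simp only [Fin.cast_val_eq_self] at hadd
  rw [minAt_zero]
  simp only [minAt, Set.mem_preimage, Set.mem_ofPred_eq]
  refine ⟨fun h i => ?_, fun h i => by linarith [hadd i, h (j + i)]⟩
  have hper : bridge (j + (i + n - j)) ω = bridge i ω := by
    rw [show (j : ℕ) + (i + n - j) = i + n by omega]
    exact bridge_periodic ω i
  linarith [hadd (i + n - j), h (i + n - j)]

theorem measure_minAt_zero_le_inv (P : Measure (Fin n → ℝ)) [IsProbabilityMeasure P]
    (hrot : ∀ j : Fin n, MeasurePreserving (fun ω k => ω (k + j)) P P)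
    (hties : ∀ j j' : Fin n, j ≠ j' → P {ω | bridge j ω = bridge j' ω} = 0) :
    P (minAt 0) ≤ (n : ℝ≥0∞)⁻¹ := by
  have hrot_eq (j : Fin n) : P (minAt j) = P (minAt 0) := by
    rw [← preimage_addRight_minAt_zero j]
    exact (hrot j).measure_preimage (measurableSet_minAt 0).nullMeasurableSet
  have hdisj : Pairwise (Function.onFun (AEDisjoint P) fun j : Fin n => minAt (n := n) j) :=
    fun j j' hne =>
      measure_mono_null (fun ω hω => le_antisymm (hω.1 j') (hω.2 j)) (hties j j' hne)
  have hsum := tsum_measure_le_measure_univ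
    (fun j : Fin n => (measurableSet_minAt (n := n) j).nullMeasurableSet) hdisj
  simp only [tsum_fintype, hrot_eq, sum_const, card_univ, Fintype.card_fin, nsmul_eq_mul,
    measure_univ] at hsum
  rw [ENNReal.le_inv_iff_mul_le, mul_comm]
  exact hsum

theorem bridge_single_last {m i : ℕ} (hi : i ≤ m) :
    bridge i (Pi.single (Fin.last m) (1 : ℝ)) = -i / (m + 1) := by
  have hzero : ∀ k ∈ range i,
      (Pi.single (Fin.last m) 1 : Fin (m + 1) → ℝ) (k : Fin (m + 1)) = 0 := by
    intro k hk
    refine Pi.single_eq_of_ne ?_ _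
    rw [mem_range] at hk
    rw [ne_eq, Fin.ext_iff, Fin.val_last, Fin.val_natCast, Nat.mod_eq_of_lt (by omega)]
    omega
  rw [bridge_apply, sum_sub_distrib, sum_eq_zero hzero]
  simp [div_eq_mul_inv]

theorem pi_setOf_bridge_eq_bridge (μ : Measure ℝ) [SigmaFinite μ] [NullSingletonClass μ]
    {j j' : Fin n} (h : j ≠ j') :
    Measure.pi (fun _ => μ) {ω : Fin n → ℝ | bridge j ω = bridge j' ω} = 0 := by
  obtain ⟨m, rfl⟩ : ∃ m, n = m + 1 := Nat.exists_eq_succ_of_ne_zero (NeZero.ne n)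
  have hker : {ω : Fin (m + 1) → ℝ | bridge j ω = bridge j' ω} =
      (LinearMap.ker (bridge j - bridge j' : (Fin (m + 1) → ℝ) →ₗ[ℝ] ℝ) : Set _) := by
    ext
    simp [sub_eq_zero]
  rw [hker]
  -- at the last basis vector, `bridge j - bridge j'` takes the value `(j' - j) / n`
  refine Measure.pi_ker_eq_zero _ (i₀ := Fin.last m) _ ?_
  have hjj' : (j : ℝ) ≠ j' := by exact_mod_cast Fin.val_ne_of_ne h
  rw [LinearMap.sub_apply, bridge_single_last (Fin.is_le j), bridge_single_last (Fin.is_le j'),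
    div_sub_div_same, neg_sub_neg]
  exact div_ne_zero (sub_ne_zero.2 hjj'.symm) (by positivity)

theorem measure_pi_minAt_zero_le_inv (μ : Measure ℝ) [IsProbabilityMeasure μ]
    [NullSingletonClass μ] :
    Measure.pi (fun _ : Fin n => μ) (minAt 0) ≤ (n : ℝ≥0∞)⁻¹ :=
  measure_minAt_zero_le_inv _ (measurePreserving_pi_comp_addRight μ)
    fun _ _ => pi_setOf_bridge_eq_bridge μ

theorem measure_pi_bridge_nonpos_eq (μ : Measure ℝ) [SigmaFinite μ]
    (hμ : μ.map (fun x => -x) = μ) :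
    Measure.pi (fun _ : Fin n => μ) {ω | ∀ i, bridge i ω ≤ 0} =
      Measure.pi (fun _ : Fin n => μ) (minAt 0) := by
  have hneg : MeasurePreserving (fun (ω : Fin n → ℝ) i => -ω i)
      (Measure.pi fun _ => μ) (Measure.pi fun _ => μ) :=
    measurePreserving_pi _ _ fun _ => ⟨measurable_neg, hμ⟩
  rw [← hneg.measure_preimage (measurableSet_minAt 0).nullMeasurableSet, minAt_zero]
  congr 1
  ext ω
  simp [← Pi.neg_def]

theorem tendsto_measure_pi_minAt_zero (μ : Measure ℝ) [IsProbabilityMeasure μ]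
    [NullSingletonClass μ] :
    Filter.Tendsto (fun n : ℕ => Measure.pi (fun _ : Fin (n + 1) => μ) (minAt 0))
      Filter.atTop (nhds 0) :=
  tendsto_of_tendsto_of_tendsto_of_le_of_le tendsto_const_nhds
    (ENNReal.tendsto_inv_nat_nhds_zero.comp (Filter.tendsto_add_atTop_nat 1))
    (fun _ => zero_le) fun _ => measure_pi_minAt_zero_le_inv μ

end DiscreteBridge

/-- for `ε₁,…,ε_n` i.i.d. `N(0,σ²)` with sample mean `ε̄` and
`Wᵢ = Σ_{k=1}^i (ε_k − ε̄)`, the probability that the centered partial sums stay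
one-signed tends to zero:
`ℙ(Wᵢ ≥ 0 for all i = 1,…,n−1) → 0` as `n → ∞`, and likewise for `{Wᵢ ≤ 0 for all i}`. -/
theorem discrete_bridge_one_signed_prob_tendsto_zero
    (σ : ℝ) (hσ : 0 < σ) :
    Filter.Tendsto (fun n : ℕ =>
        (Measure.pi fun _ : Fin n => gaussianReal 0 ⟨σ ^ 2, sq_nonneg σ⟩)
          {ω : Fin n → ℝ | ∀ i : ℕ, 1 ≤ i → i ≤ n - 1 →
            0 ≤ ∑ k : Fin n, if (k : ℕ) < i then ω k - (∑ m, ω m) / (n : ℝ) else 0})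
      Filter.atTop (nhds 0) ∧
    Filter.Tendsto (fun n : ℕ =>
        (Measure.pi fun _ : Fin n => gaussianReal 0 ⟨σ ^ 2, sq_nonneg σ⟩)
          {ω : Fin n → ℝ | ∀ i : ℕ, 1 ≤ i → i ≤ n - 1 →
            (∑ k : Fin n, if (k : ℕ) < i then ω k - (∑ m, ω m) / (n : ℝ) else 0) ≤ 0})
      Filter.atTop (nhds 0) := by
  -- `⟨σ ^ 2, _⟩` elaborates at type `{r // 0 ≤ r}`, on which instance search for
  -- `gaussianReal 0 _` fails; naming it as an `NNReal` avoids this.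
  set v : NNReal := ⟨σ ^ 2, sq_nonneg σ⟩
  have hv : v ≠ 0 := ne_of_gt (show (0 : ℝ) < σ ^ 2 by positivity)
  clear_value v
  have := nullSingletonClass_gaussianReal (μ := 0) hv
  have hsymm : (gaussianReal 0 v).map (fun x => -x) = gaussianReal 0 v := by
    rw [gaussianReal_map_neg, neg_zero]
  refine ⟨(Filter.tendsto_add_atTop_iff_nat 1).1 ?_, (Filter.tendsto_add_atTop_iff_nat 1).1 ?_⟩
  · convert DiscreteBridge.tendsto_measure_pi_minAt_zero (gaussianReal 0 v) using 3 with n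
    rw [DiscreteBridge.minAt_zero]
    exact Set.ext fun ω =>
      DiscreteBridge.forall_sum_ite_lt_iff_forall_bridge (p := (0 ≤ ·)) le_rfl ω
  · convert DiscreteBridge.tendsto_measure_pi_minAt_zero (gaussianReal 0 v) using 2 with n
    rw [← DiscreteBridge.measure_pi_bridge_nonpos_eq _ hsymm]
    exact congrArg _ <| Set.ext fun ω =>
      DiscreteBridge.forall_sum_ite_lt_iff_forall_bridge (p := (· ≤ 0)) le_rfl ω
end

section
/- (Bias under exact segmentation.) In the setting of the exact-segmentation KKT conditions for 1D TV (jump locations N_{•0} < … < N_{•L}, piece sizes N_l, signs s₀ = s_L = 0 and s₁,…,s_{L−1} ∈ {−1,+1}), suppose the jump signs alternate, s_l = −s_{l−1} for l = 2,…,L−1, and the TV estimate f̂_λ(y) achieves exact segmentation at λ > 0 with piece values ĥ_l. Then the fitted level on each piece is biased away from the piece mean by |ĥ_l − ȳ_l| = 2λ/N_l for every interior piece 2 ≤ l ≤ L−1, and by |ĥ_l − ȳ_l| = λ/N_l for the boundary pieces l ∈ {1, L}. -/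
/-!
Perturb the minimiser `f̂` along the indicator of a tail `{i ≥ a}`. Only the difference at `a`
moves, so when `f̂` jumps there the objective is differentiable along this direction, and
first-order optimality says that the residual `y − f̂` sums over the tail to `λ` times the sign of
the jump, i.e. to `λ s_k` when `a = N_{•k}` (also for `k = 0, L`, where `s_k = 0`). Subtracting two
consecutive tails gives `N_l (ĥ_l − ȳ_l) = λ (s_l − s_{l−1})`, and with alternating signs
`|s_l − s_{l−1}|` is `2` on interior pieces and `1` on the two boundary pieces.
-/

open Matrix

theorem hasDerivAt_abs_add_mul (d c : ℝ) (h : c ≠ 0 → d ≠ 0) :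
    HasDerivAt (fun t => |d + t * c|) (Real.sign d * c) 0 := by
  by_cases hc : c = 0
  · simpa [hc] using hasDerivAt_const (0 : ℝ) |d|
  have hline : HasDerivAt (fun t => d + t * c) c 0 := by
    simpa using ((hasDerivAt_id (0 : ℝ)).mul_const c).const_add d
  rcases (h hc).lt_or_gt with hd | hd
  · simpa [Function.comp_def, Real.sign_of_neg hd] using
      (hasDerivAt_abs_neg (by simpa using hd)).comp (0 : ℝ) hline
  · simpa [Function.comp_def, Real.sign_of_pos hd] using
      (hasDerivAt_abs_pos (by simpa using hd)).comp (0 : ℝ) hline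

/-- The KKT condition `y − f̂ = λ Bᵀ sign(B f̂)` tested against a direction `e` that moves no zero
entry of `B f̂`. -/
theorem dotProduct_sub_eq_of_tvF_le {P M : ℕ} (B : Matrix (Fin P) (Fin M) ℝ) (lam : ℝ)
    (y fhat e : Fin M → ℝ) (hmin : ∀ f, tvF B lam y fhat ≤ tvF B lam y f)
    (hsupp : ∀ j, (B *ᵥ e) j ≠ 0 → (B *ᵥ fhat) j ≠ 0) :
    (y - fhat) ⬝ᵥ e = lam * ((fun j => Real.sign ((B *ᵥ fhat) j)) ⬝ᵥ B *ᵥ e) := by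
  set g : ℝ → ℝ := fun t => tvF B lam y (fhat + t • e)
  have hg : g = fun t => (1 / 2) * ∑ i, (y i - fhat i - t * e i) ^ 2 +
      lam * ∑ j, |(B *ᵥ fhat) j + t * (B *ᵥ e) j| := by
    funext t
    simp only [g, tvF, mulVec_add, mulVec_smul, Pi.add_apply, Pi.smul_apply, smul_eq_mul, sub_sub]
  have hderiv : HasDerivAt g (-((y - fhat) ⬝ᵥ e) +
      lam * ((fun j => Real.sign ((B *ᵥ fhat) j)) ⬝ᵥ B *ᵥ e)) 0 := by
    rw [hg]
    have hquad : ∀ i, HasDerivAt (fun t => (y i - fhat i - t * e i) ^ 2)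
        (-2 * ((y i - fhat i) * e i)) 0 := fun i => by
      refine ((((hasDerivAt_id (0 : ℝ)).mul_const (e i)).const_sub
        (y i - fhat i)).fun_pow 2).congr_deriv ?_
      simp only [id_eq]; ring
    have := ((HasDerivAt.fun_sum (u := Finset.univ) fun i _ => hquad i).const_mul (1 / 2)).fun_add
      ((HasDerivAt.fun_sum (u := Finset.univ) fun j _ =>
        hasDerivAt_abs_add_mul ((B *ᵥ fhat) j) ((B *ᵥ e) j) (hsupp j)).const_mul lam)
    refine this.congr_deriv ?_
    simp only [dotProduct, Pi.sub_apply, Finset.mul_sum, ← Finset.sum_neg_distrib]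
    congr 1
    exact Finset.sum_congr rfl fun i _ => by ring
  have hlocal : IsLocalMin g 0 :=
    Filter.Eventually.of_forall fun t => by simpa [g] using hmin (fhat + t • e)
  linarith [hlocal.hasDerivAt_eq_zero hderiv]

theorem oneDiff_mulVec_apply_s18 {N : ℕ} (g : Fin N → ℝ) (j : Fin (N - 1)) (i i' : Fin N)
    (hi : (i : ℕ) = j) (hi' : (i' : ℕ) = j + 1) :
    (oneDiff N *ᵥ g) j = g i - g i' := by
  have hii' : i ≠ i' := fun h => by simp only [Fin.ext_iff] at h; omega
  have hterm : ∀ k, oneDiff N j k * g k =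
      (if k = i then g k else 0) - (if k = i' then g k else 0) := by
    intro k
    by_cases hk : k = i
    · subst hk; simp [oneDiff, hi, hii']
    · by_cases hk' : k = i'
      · subst hk'; simp [oneDiff, hi', hk]
      · have h1 : (k : ℕ) ≠ j := fun h => hk (Fin.ext (h.trans hi.symm))
        have h2 : (k : ℕ) ≠ j + 1 := fun h => hk' (Fin.ext (h.trans hi'.symm))
        simp [oneDiff, h1, h2, hk, hk']
  simp only [mulVec, dotProduct, hterm, Finset.sum_sub_distrib, Finset.sum_ite_eq',
    Finset.mem_univ, if_true]

theorem oneDiff_mulVec_tail {N : ℕ} (a : ℕ) (j : Fin (N - 1)) :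
    (oneDiff N *ᵥ fun i : Fin N => if a ≤ (i : ℕ) then (1 : ℝ) else 0) j =
      if (j : ℕ) + 1 = a then -1 else 0 := by
  have hj := j.isLt
  rw [oneDiff_mulVec_apply_s18 _ j ⟨j, by omega⟩ ⟨j + 1, by omega⟩ rfl rfl]
  split_ifs <;> simp only at * <;> first | omega | norm_num

theorem sum_tail_residual_eq {N : ℕ} {lam : ℝ} {y fhat : Fin N → ℝ}
    (hmin : ∀ f, tvF (oneDiff N) lam y fhat ≤ tvF (oneDiff N) lam y f) (a : ℕ)
    (hjump : ∀ j : Fin (N - 1), (j : ℕ) + 1 = a → (oneDiff N *ᵥ fhat) j ≠ 0) :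
    ∑ i : Fin N, (if a ≤ (i : ℕ) then y i - fhat i else 0) =
      -lam * ∑ j : Fin (N - 1),
        if (j : ℕ) + 1 = a then Real.sign ((oneDiff N *ᵥ fhat) j) else 0 := by
  have h := dotProduct_sub_eq_of_tvF_le (oneDiff N) lam y fhat
    (fun i => if a ≤ (i : ℕ) then 1 else 0) hmin fun j hj =>
    hjump j (by by_contra h; simp [oneDiff_mulVec_tail, h] at hj)
  simp only [dotProduct, oneDiff_mulVec_tail, Pi.sub_apply, mul_ite, mul_one, mul_zero,
    mul_neg] at h
  rw [h, Finset.mul_sum, Finset.mul_sum]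
  exact Finset.sum_congr rfl fun j _ => by split_ifs <;> ring

theorem sum_ite_Ico_eq_sub {N : ℕ} (g : Fin N → ℝ) {a b : ℕ} (hab : a ≤ b) :
    ∑ i : Fin N, (if a ≤ (i : ℕ) ∧ (i : ℕ) < b then g i else 0) =
      ∑ i : Fin N, (if a ≤ (i : ℕ) then g i else 0) -
        ∑ i : Fin N, (if b ≤ (i : ℕ) then g i else 0) := by
  rw [← Finset.sum_sub_distrib]
  exact Finset.sum_congr rfl fun i _ => by split_ifs <;> first | omega | ring

theorem sum_ite_Ico_one {N : ℕ} {a b : ℕ} (hb : b ≤ N) :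
    ∑ i : Fin N, (if a ≤ (i : ℕ) ∧ (i : ℕ) < b then (1 : ℝ) else 0) = ((b - a : ℕ) : ℝ) := by
  rw [Fin.sum_univ_eq_sum_range (fun i => if a ≤ i ∧ i < b then (1 : ℝ) else 0), Finset.sum_boole]
  congr 1
  rw [← Nat.card_Ico]
  congr 1
  ext i
  simp only [Finset.mem_filter, Finset.mem_range, Finset.mem_Ico]
  omega

structure IsJumpSeq (N L : ℕ) (Nb : ℕ → ℕ) : Prop where
  zero : Nb 0 = 0
  last : Nb L = N
  lt_succ : ∀ l, l < L → Nb l < Nb (l + 1)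

namespace IsJumpSeq

variable {N L : ℕ} {Nb : ℕ → ℕ}

theorem strictMonoOn (h : IsJumpSeq N L Nb) : StrictMonoOn Nb (Set.Iic L) :=
  strictMonoOn_Iic_of_lt_succ fun m hm => by simpa using h.lt_succ m hm

theorem lt_last (h : IsJumpSeq N L Nb) {k : ℕ} (hk : k < L) : Nb k < N :=
  h.last ▸ h.strictMonoOn (Set.mem_Iic.2 hk.le) Set.self_mem_Iic hk

theorem le_last (h : IsJumpSeq N L Nb) {k : ℕ} (hk : k ≤ L) : Nb k ≤ N :=
  h.last ▸ h.strictMonoOn.monotoneOn (Set.mem_Iic.2 hk) Set.self_mem_Iic hk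

theorem pos (h : IsJumpSeq N L Nb) {k : ℕ} (hk1 : 1 ≤ k) (hkL : k ≤ L) : 0 < Nb k :=
  h.zero ▸ h.strictMonoOn (Set.mem_Iic.2 (Nat.zero_le L)) (Set.mem_Iic.2 hkL) hk1

theorem pred_lt (h : IsJumpSeq N L Nb) {l : ℕ} (hl1 : 1 ≤ l) (hlL : l ≤ L) : Nb (l - 1) < Nb l := by
  simpa [Nat.sub_add_cancel hl1] using h.lt_succ (l - 1) (by omega)

end IsJumpSeq

structure IsExactSegmentation {N : ℕ} (L : ℕ) (Nb : ℕ → ℕ) (s hhat : ℕ → ℝ) (fhat : Fin N → ℝ) :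
    Prop where
  eq_on_piece : ∀ l, 1 ≤ l → l ≤ L →
    ∀ j : Fin N, Nb (l - 1) ≤ (j : ℕ) → (j : ℕ) < Nb l → fhat j = hhat l
  sign_jump : ∀ l, 1 ≤ l → l ≤ L - 1 → Real.sign (hhat (l + 1) - hhat l) = s l

section ExactSegmentation

variable {N L : ℕ} {Nb : ℕ → ℕ} {lam : ℝ} {y fhat : Fin N → ℝ} {s hhat : ℕ → ℝ}

theorem oneDiff_mulVec_eq_of_jump (hNb : IsJumpSeq N L Nb)
    (hseg : IsExactSegmentation L Nb s hhat fhat)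
    {k : ℕ} (hk1 : 1 ≤ k) (hkL : k < L) (j : Fin (N - 1)) (hj : (j : ℕ) + 1 = Nb k) :
    (oneDiff N *ᵥ fhat) j = hhat k - hhat (k + 1) := by
  have hlt := hNb.lt_last hkL
  have hprev := hNb.pred_lt hk1 hkL.le
  have hnext := hNb.lt_succ k hkL
  rw [oneDiff_mulVec_apply_s18 fhat j ⟨j, by omega⟩ ⟨j + 1, by omega⟩ rfl rfl,
    hseg.eq_on_piece k hk1 hkL.le ⟨j, by omega⟩ (by simp only; omega) (by simp only; omega),
    hseg.eq_on_piece (k + 1) (by omega) hkL ⟨j + 1, by omega⟩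
      (by simp only [Nat.add_sub_cancel]; omega) (by simp only; omega)]

theorem sum_tail_residual_eq_lam_mul (hNb : IsJumpSeq N L Nb)
    (hmin : ∀ f, tvF (oneDiff N) lam y fhat ≤ tvF (oneDiff N) lam y f)
    (hseg : IsExactSegmentation L Nb s hhat fhat)
    (hs : ∀ l, 1 ≤ l → l ≤ L - 1 → s l = 1 ∨ s l = -1) (hs0 : s 0 = 0) (hsL : s L = 0)
    {k : ℕ} (hkL : k ≤ L) :
    ∑ i : Fin N, (if Nb k ≤ (i : ℕ) then y i - fhat i else 0) = lam * s k := by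
  have hsign_jump : ∀ j : Fin (N - 1), (j : ℕ) + 1 = Nb k →
      1 ≤ k ∧ k < L ∧ Real.sign ((oneDiff N *ᵥ fhat) j) = -s k := by
    intro j hj
    have hk0 : k ≠ 0 := by rintro rfl; rw [hNb.zero] at hj; omega
    have hkL' : k ≠ L := by rintro rfl; rw [hNb.last] at hj; omega
    refine ⟨by omega, by omega, ?_⟩
    rw [oneDiff_mulVec_eq_of_jump hNb hseg (by omega) (by omega) j hj, ← neg_sub,
      Real.sign_neg, hseg.sign_jump k (by omega) (by omega)]
  rw [sum_tail_residual_eq hmin (Nb k) fun j hj hzero => by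
    obtain ⟨hk1, hkL', hsgn⟩ := hsign_jump j hj
    rw [hzero, Real.sign_zero] at hsgn
    rcases hs k hk1 (by omega) with h | h <;> rw [h] at hsgn <;> norm_num at hsgn]
  by_cases hk : 1 ≤ k ∧ k < L
  · have hpos := hNb.pos hk.1 hkL
    have hlt := hNb.lt_last hk.2
    rw [Finset.sum_eq_single (⟨Nb k - 1, by omega⟩ : Fin (N - 1)), if_pos (by simp only; omega),
      (hsign_jump _ (by simp only; omega)).2.2]
    · ring
    · intro j _ hj
      rw [if_neg]
      exact fun h => hj (Fin.ext (by simp only; omega))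
    · simp
  · have hsk : s k = 0 := by
      rcases Nat.eq_zero_or_pos k with rfl | hk1
      · exact hs0
      · rw [show k = L by omega, hsL]
    rw [Finset.sum_eq_zero fun j _ =>
      if_neg fun hj => hk ⟨(hsign_jump j hj).1, (hsign_jump j hj).2.1⟩, hsk, mul_zero, mul_zero]

theorem sum_piece_sub_card_mul_eq (hNb : IsJumpSeq N L Nb)
    (hmin : ∀ f, tvF (oneDiff N) lam y fhat ≤ tvF (oneDiff N) lam y f)
    (hseg : IsExactSegmentation L Nb s hhat fhat)
    (hs : ∀ l, 1 ≤ l → l ≤ L - 1 → s l = 1 ∨ s l = -1) (hs0 : s 0 = 0) (hsL : s L = 0)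
    {l : ℕ} (hl1 : 1 ≤ l) (hlL : l ≤ L) :
    (∑ i : Fin N, if Nb (l - 1) ≤ (i : ℕ) ∧ (i : ℕ) < Nb l then y i else 0) -
      ((Nb l - Nb (l - 1) : ℕ) : ℝ) * hhat l = lam * (s (l - 1) - s l) := by
  have hfhat : ∑ i : Fin N, (if Nb (l - 1) ≤ (i : ℕ) ∧ (i : ℕ) < Nb l then fhat i else 0) =
      ((Nb l - Nb (l - 1) : ℕ) : ℝ) * hhat l := by
    rw [← sum_ite_Ico_one (hNb.le_last hlL), Finset.sum_mul]
    refine Finset.sum_congr rfl fun i _ => ?_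
    split_ifs with h
    · rw [hseg.eq_on_piece l hl1 hlL i h.1 h.2, one_mul]
    · rw [zero_mul]
  rw [← hfhat, ← Finset.sum_sub_distrib, mul_sub,
    ← sum_tail_residual_eq_lam_mul hNb hmin hseg hs hs0 hsL (by omega : l - 1 ≤ L),
    ← sum_tail_residual_eq_lam_mul hNb hmin hseg hs hs0 hsL hlL,
    ← sum_ite_Ico_eq_sub _ (hNb.pred_lt hl1 hlL).le]
  exact Finset.sum_congr rfl fun i _ => by split_ifs <;> ring

theorem sub_pieceMean_eq (hNb : IsJumpSeq N L Nb)
    (hmin : ∀ f, tvF (oneDiff N) lam y fhat ≤ tvF (oneDiff N) lam y f)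
    (hseg : IsExactSegmentation L Nb s hhat fhat)
    (hs : ∀ l, 1 ≤ l → l ≤ L - 1 → s l = 1 ∨ s l = -1) (hs0 : s 0 = 0) (hsL : s L = 0)
    {l : ℕ} (hl1 : 1 ≤ l) (hlL : l ≤ L) :
    hhat l - pieceMean y Nb l = lam * (s l - s (l - 1)) / ((Nb l - Nb (l - 1) : ℕ) : ℝ) := by
  have hcard : (0 : ℝ) < ((Nb l - Nb (l - 1) : ℕ) : ℝ) :=
    Nat.cast_pos.2 (Nat.sub_pos_of_lt (hNb.pred_lt hl1 hlL))
  have := sum_piece_sub_card_mul_eq hNb hmin hseg hs hs0 hsL hl1 hlL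
  rw [pieceMean]
  field_simp
  linarith

end ExactSegmentation

theorem tv_exact_segmentation_bias_general
    (N L : ℕ) (hL : 2 ≤ L)
    (y : Fin N → ℝ) (lam : ℝ) (hlam : 0 < lam)
    (Nb : ℕ → ℕ) (hNb0 : Nb 0 = 0) (hNbL : Nb L = N)
    (hNbmono : ∀ l, l < L → Nb l < Nb (l + 1))
    (s : ℕ → ℝ) (hs0 : s 0 = 0) (hsL : s L = 0)
    (hs : ∀ l, 1 ≤ l → l ≤ L - 1 → s l = 1 ∨ s l = -1)
    (halt : ∀ l, 2 ≤ l → l ≤ L - 1 → s l = -s (l - 1))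
    (hhat : ℕ → ℝ)
    (hES : ∃ fhat : Fin N → ℝ,
      (∀ f : Fin N → ℝ, tvF (oneDiff N) lam y fhat ≤ tvF (oneDiff N) lam y f) ∧
      (∀ l, 1 ≤ l → l ≤ L →
        ∀ j : Fin N, Nb (l - 1) ≤ (j : ℕ) → (j : ℕ) < Nb l → fhat j = hhat l) ∧
      (∀ l, 1 ≤ l → l ≤ L - 1 → Real.sign (hhat (l + 1) - hhat l) = s l)) :
    (∀ l, 2 ≤ l → l ≤ L - 1 →
      |hhat l - pieceMean y Nb l| = 2 * lam / ((Nb l - Nb (l - 1) : ℕ) : ℝ)) ∧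
    |hhat 1 - pieceMean y Nb 1| = lam / ((Nb 1 - Nb 0 : ℕ) : ℝ) ∧
    |hhat L - pieceMean y Nb L| = lam / ((Nb L - Nb (L - 1) : ℕ) : ℝ) := by
  obtain ⟨fhat, hmin, hseg, hsign⟩ := hES
  have hbias : ∀ l, 1 ≤ l → l ≤ L → |hhat l - pieceMean y Nb l| =
      lam * |s l - s (l - 1)| / ((Nb l - Nb (l - 1) : ℕ) : ℝ) := fun l hl1 hlL => by
    rw [sub_pieceMean_eq ⟨hNb0, hNbL, hNbmono⟩ hmin ⟨hseg, hsign⟩ hs hs0 hsL hl1 hlL, abs_div,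
      abs_mul, abs_of_pos hlam, Nat.abs_cast]
  have hunit : ∀ l, 1 ≤ l → l ≤ L - 1 → |s l| = 1 := fun l hl1 hlL => by
    rcases hs l hl1 hlL with h | h <;> simp [h]
  refine ⟨fun l hl2 hlL => ?_, ?_, ?_⟩
  · rw [hbias l (by omega) (by omega), halt l hl2 hlL, ← neg_add', abs_neg, ← two_mul, abs_mul,
      hunit (l - 1) (by omega) (by omega)]
    ring
  · rw [hbias 1 le_rfl (by omega), Nat.sub_self, hs0, sub_zero, hunit 1 le_rfl (by omega),
      mul_one]
  · rw [hbias L (by omega) le_rfl, hsL, zero_sub, abs_neg, hunit (L - 1) (by omega) le_rfl,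
      mul_one]

/-- bias under exact segmentation: if the jump signs alternate and the TV
estimate achieves exact segmentation at `λ > 0` with piece values `ĥ_l`, then the fitted
level on each interior piece is biased away from the piece mean by `2λ/N_l`, and on each
boundary piece by `λ/N_l`. -/
theorem tv_exact_segmentation_bias
    (N L : ℕ) (hN : 2 ≤ N) (hL : 2 ≤ L)
    (y : Fin N → ℝ) (lam : ℝ) (hlam : 0 < lam)
    (Nb : ℕ → ℕ) (hNb0 : Nb 0 = 0) (hNbL : Nb L = N)
    (hNbmono : ∀ l, l < L → Nb l < Nb (l + 1))
    (s : ℕ → ℝ) (hs0 : s 0 = 0) (hsL : s L = 0)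
    (hs : ∀ l, 1 ≤ l → l ≤ L - 1 → s l = 1 ∨ s l = -1)
    (halt : ∀ l, 2 ≤ l → l ≤ L - 1 → s l = -s (l - 1))
    (hhat : ℕ → ℝ)
    (hES : ∃ fhat : Fin N → ℝ,
      (∀ f : Fin N → ℝ, tvF (oneDiff N) lam y fhat ≤ tvF (oneDiff N) lam y f) ∧
      (∀ l, 1 ≤ l → l ≤ L →
        ∀ j : Fin N, Nb (l - 1) ≤ (j : ℕ) → (j : ℕ) < Nb l → fhat j = hhat l) ∧
      (∀ l, 1 ≤ l → l ≤ L - 1 → Real.sign (hhat (l + 1) - hhat l) = s l)) :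
    (∀ l, 2 ≤ l → l ≤ L - 1 →
      |hhat l - pieceMean y Nb l| = 2 * lam / ((Nb l - Nb (l - 1) : ℕ) : ℝ)) ∧
    |hhat 1 - pieceMean y Nb 1| = lam / ((Nb 1 - Nb 0 : ℕ) : ℝ) ∧
    |hhat L - pieceMean y Nb L| = lam / ((Nb L - Nb (L - 1) : ℕ) : ℝ) :=
  tv_exact_segmentation_bias_general N L hL y lam hlam Nb hNb0 hNbL hNbmono s hs0 hsL hs halt hhat
    hES
end
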